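/- arXiv:1808.02568 — 11 statements merged into one kernel-verified Lean document; each statement's English description precedes it below -/
import Mathlib

section
/- In a connected graph, if two vertices u and v are connected but not biconnected, then the first cutvertex encountered on any path from u to v is the same; that is, the nearest cutvertex separating u from v is uniquely defined. -/
/-- `w` is a cutvertex separating `u` from `v`: `w ∉ {u, v}` and every `u`–`v` walk in `G`
passes through `w`. -/
def SepCut {V : Type*} (G : SimpleGraph V) (u v w : V) : Prop :=
  w ≠ u ∧ w ≠ v ∧ ∀ p : G.Walk u v, w ∈ p.support

/-- `w` is the first cutvertex separating `u` from `v` encountered along the walk `p`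
(i.e. the separating cutvertex occurring earliest in the vertex sequence of `p`). -/
def FirstCutOn {V : Type*} [DecidableEq V] (G : SimpleGraph V) (u v : V)
    (p : G.Walk u v) (w : V) : Prop :=
  SepCut G u v w ∧ ∀ w', SepCut G u v w' → p.support.idxOf w ≤ p.support.idxOf w'

namespace SimpleGraph.Walk

variable {V : Type*} {G : SimpleGraph V} {u v w x : V}

theorem mem_support_takeUntil_iff [DecidableEq V] (p : G.Walk u v) (hx : x ∈ p.support) :
    w ∈ (p.takeUntil x hx).support ↔ p.support.idxOf w ≤ p.support.idxOf x := by
  rw [(p.support_takeUntil_prefix_support hx).mem_iff_idxOf_lt_length, length_support,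
    length_takeUntil]
  omega

theorem IsPath.eq_of_mem_support_takeUntil_of_mem_support_dropUntil [DecidableEq V]
    {p : G.Walk u v} (hp : p.IsPath) (hx : x ∈ p.support)
    (hwt : w ∈ (p.takeUntil x hx).support) (hwd : w ∈ (p.dropUntil x hx).support) : w = x := by
  have hnodup := hp.support_nodup
  rw [← p.take_spec hx, support_append] at hnodup
  rw [← cons_tail_support, List.mem_cons] at hwd
  exact hwd.resolve_right fun hw ↦ List.disjoint_of_nodup_append hnodup hwt hw

theorem IsPath.idxOf_support_lt_of_forall_mem_support [DecidableEq V] {a b : V}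
    {p q : G.Walk u v} (hq : q.IsPath) (ha : ∀ r : G.Walk u v, a ∈ r.support)
    (hb : ∀ r : G.Walk u v, b ∈ r.support) (hab : p.support.idxOf a < p.support.idxOf b) :
    q.support.idxOf a < q.support.idxOf b := by
  by_contra! hba
  have hne : a ≠ b := by rintro rfl; exact hab.false
  -- `b` lies before `a` on `q`, so it can lie neither on `p` up to `a` nor on `q` after `a`
  have hb_mem := hb ((p.takeUntil a (ha p)).append (q.dropUntil a (ha q)))
  rw [mem_support_append_iff] at hb_mem
  rcases hb_mem with hb_p | hb_q
  · rw [mem_support_takeUntil_iff] at hb_p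
    omega
  · exact hne (hq.eq_of_mem_support_takeUntil_of_mem_support_dropUntil (ha q)
      ((q.mem_support_takeUntil_iff _).2 hba) hb_q).symm

end SimpleGraph.Walk

theorem stmt0_general {V : Type*} [DecidableEq V] (G : SimpleGraph V) (u v : V)
    (p q : G.Walk u v) (hq : q.IsPath)
    (w₁ w₂ : V) (h₁ : FirstCutOn G u v p w₁) (h₂ : FirstCutOn G u v q w₂) :
    w₁ = w₂ := by
  by_contra hne
  have hle_p := h₁.2 w₂ h₂.1
  have hle_q := h₂.2 w₁ h₁.1
  have hlt_p : p.support.idxOf w₁ < p.support.idxOf w₂ :=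
    hle_p.lt_of_ne fun h ↦ hne ((List.idxOf_inj (h₁.1.2.2 p)).1 h)
  have := hq.idxOf_support_lt_of_forall_mem_support h₁.1.2.2 h₂.1.2.2 hlt_p
  omega

/-- If `u` and `v` are connected but not biconnected (there is a cutvertex separating
them), then the first separating cutvertex encountered on any path from `u` to `v` is the
same: the nearest cutvertex separating `u` from `v` is uniquely defined. -/
theorem stmt0 {V : Type*} [DecidableEq V] (G : SimpleGraph V) (u v : V)
    (hconn : G.Reachable u v) (hsep : ∃ w, SepCut G u v w)
    (p q : G.Walk u v) (hp : p.IsPath) (hq : q.IsPath)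
    (w₁ w₂ : V) (h₁ : FirstCutOn G u v p w₁) (h₂ : FirstCutOn G u v q w₂) :
    w₁ = w₂ :=
  stmt0_general G u v p q hq w₁ w₂ h₁ h₂
end

section
/- Let T be a tree, S a subset of its vertices, and call a node x S-critical if x = meet(s1,s2,s3) for some s1,s2,s3 ∈ S. Then the number of S-critical nodes of T is at most 2|S| − 2 (in particular at most max(0, 2|S|−2)). -/
/-!
Root the tree at some `r ∈ S` and send each `S`-critical node `x` to the set of `s ∈ S` whose
path to `r` passes through `x`. In a tree, lying on the path from `a` to `b` is metric
betweenness, `d(a, x) + d(x, b) = d(a, b)`, and the path from `a` to `b` runs inside the paths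
from `r` to `a` and to `b`. Hence these sets form a laminar family, a critical node is
recovered from its set (it is the meet of `r` and two members of it), and `{r}` is never
attained. A laminar family of nonempty subsets of `S` has at most `2|S| - 1` members, and `{r}`
can be added to ours.
-/

/-- `x` lies on the (in a tree, unique) path between `a` and `b`. -/
def OnPath {V : Type*} (G : SimpleGraph V) (a b x : V) : Prop :=
  ∀ p : G.Walk a b, p.IsPath → x ∈ p.support

/-- `x` is `S`-critical: `x = meet(s₁,s₂,s₃)` for some `s₁,s₂,s₃ ∈ S`, i.e. `x` lies on
all three pairwise tree-paths between some three vertices of `S`. -/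
def SCritical {V : Type*} (G : SimpleGraph V) (S : Set V) (x : V) : Prop :=
  ∃ s₁ ∈ S, ∃ s₂ ∈ S, ∃ s₃ ∈ S,
    OnPath G s₁ s₂ x ∧ OnPath G s₂ s₃ x ∧ OnPath G s₁ s₃ x

namespace Finset

variable {α : Type*}

def IsLaminar (F : Finset (Finset α)) : Prop :=
  ∀ A ∈ F, ∀ B ∈ F, A ⊆ B ∨ B ⊆ A ∨ Disjoint A B

namespace IsLaminar

variable {F : Finset (Finset α)}

theorem subset {F' : Finset (Finset α)} (hF : IsLaminar F) (h : F' ⊆ F) : IsLaminar F' :=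
  fun A hA B hB => hF A (h hA) B (h hB)

theorem image_sdiff [DecidableEq α] (hF : IsLaminar F) (X : Finset α) :
    IsLaminar (F.image (· \ X)) := by
  simp only [IsLaminar, mem_image, forall_exists_index, and_imp, forall_apply_eq_imp_iff₂]
  intro A hA B hB
  rcases hF A hA B hB with h | h | h
  · exact .inl (sdiff_subset_sdiff h le_rfl)
  · exact .inr (.inl (sdiff_subset_sdiff h le_rfl))
  · exact .inr (.inr (disjoint_of_subset_left sdiff_subset
      (disjoint_of_subset_right sdiff_subset h)))

theorem insert_singleton [DecidableEq α] (hF : IsLaminar F) (a : α) :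
    IsLaminar (insert {a} F) := by
  have key : ∀ B : Finset α, {a} ⊆ B ∨ Disjoint {a} B := fun B => by
    by_cases ha : a ∈ B
    · exact .inl (singleton_subset_iff.2 ha)
    · exact .inr (disjoint_singleton_left.2 ha)
  simp only [IsLaminar, mem_insert, forall_eq_or_imp]
  refine ⟨⟨by simp, fun B _ => (key B).imp id .inr⟩, fun A hA => ⟨?_, fun B hB => hF A hA B hB⟩⟩
  rcases key A with h | h
  · exact .inr (.inl h)
  · exact .inr (.inr h.symm)

end IsLaminar

theorem mem_iff_mem_of_subset_or_disjoint {A B : Finset α} {a y : α} (hB : A ⊆ B ∨ Disjoint A B)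
    (ha : a ∈ A) (hy : y ∈ A) : y ∈ B ↔ a ∈ B := by
  rcases hB with h | h
  · exact iff_of_true (h hy) (h ha)
  · exact iff_of_false (disjoint_left.1 h hy) (disjoint_left.1 h ha)

variable [DecidableEq α]

/-- Whether `B` contains `A` is recorded by whether `B \ A.erase a` contains `a`. -/
theorem injOn_sdiff_erase {A : Finset α} {a : α} (ha : a ∈ A) :
    Set.InjOn (· \ A.erase a) {B | A ⊆ B ∨ Disjoint A B} := by
  intro B₁ hB₁ B₂ hB₂ h
  simp only at h
  have ha' : ∀ B : Finset α, a ∈ B \ A.erase a ↔ a ∈ B := fun B => by simp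
  ext y
  by_cases hy : y ∈ A.erase a
  · have hyA := mem_of_mem_erase hy
    rw [mem_iff_mem_of_subset_or_disjoint hB₁ ha hyA, mem_iff_mem_of_subset_or_disjoint hB₂ ha hyA,
      ← ha' B₁, ← ha' B₂, h]
  · have := congrArg (y ∈ ·) h
    simpa [hy] using this

theorem two_le_card_sdiff_erase {A B : Finset α} {a : α} (ha : a ∈ A) (h : A ⊂ B) :
    2 ≤ #(B \ A.erase a) := by
  have hA := card_lt_card h
  rw [card_sdiff_of_subset ((erase_subset a A).trans h.subset), card_erase_of_mem ha]
  have := card_pos.2 ⟨a, ha⟩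
  omega

namespace IsLaminar

/-- Contracting a minimal member `A` to one of its points `a` leaves a family of the same kind,
one member shorter, in the strictly smaller ground set `S \ A.erase a`. -/
theorem card_le_card_sub_one {F : Finset (Finset α)} {S : Finset α} (hF : IsLaminar F)
    (hFS : ∀ A ∈ F, A ⊆ S) (hF₂ : ∀ A ∈ F, 2 ≤ #A) : #F ≤ #S - 1 := by
  induction S using Finset.strongInduction generalizing F with
  | H S ih =>
  rcases F.eq_empty_or_nonempty with rfl | hne
  · simp
  obtain ⟨A, hAF, hAmin⟩ := F.exists_minimal hne
  have hA₂ := hF₂ A hAF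
  obtain ⟨a, ha⟩ : A.Nonempty := card_pos.1 (by omega)
  set X := A.erase a
  have hXA : X ⊆ A := erase_subset a A
  have hXS : X ⊆ S := hXA.trans (hFS A hAF)
  have hX : #X + 1 = #A := card_erase_add_one ha
  have hAB : ∀ B ∈ F.erase A, A ⊂ B ∨ Disjoint A B := fun B hB => by
    obtain ⟨hBA, hBF⟩ := mem_erase.1 hB
    rcases hF A hAF B hBF with h | h | h
    · exact .inl (h.ssubset_of_ne (Ne.symm hBA))
    · exact absurd (hAmin hBF h) (fun h' => hBA (h.antisymm h'))
    · exact .inr h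
  have hinj : Set.InjOn (· \ X) (F.erase A : Set (Finset α)) :=
    (injOn_sdiff_erase ha).mono fun B hB => (hAB B hB).imp_left (·.subset)
  have hF'S : ∀ B ∈ (F.erase A).image (· \ X), B ⊆ S \ X := by
    simp only [mem_image, forall_exists_index, and_imp, forall_apply_eq_imp_iff₂]
    exact fun B hB => sdiff_subset_sdiff (hFS B (mem_of_mem_erase hB)) le_rfl
  have hF'₂ : ∀ B ∈ (F.erase A).image (· \ X), 2 ≤ #B := by
    simp only [mem_image, forall_exists_index, and_imp, forall_apply_eq_imp_iff₂]
    intro B hB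
    rcases hAB B hB with h | h
    · exact two_le_card_sdiff_erase ha h
    · rw [sdiff_eq_self_of_disjoint (disjoint_of_subset_left hXA h).symm]
      exact hF₂ B (mem_of_mem_erase hB)
  have hS' := ih (S \ X) (sdiff_ssubset hXS (card_pos.1 (by omega)))
    ((hF.subset (erase_subset A F)).image_sdiff X) hF'S hF'₂
  rw [card_image_of_injOn hinj, card_sdiff_of_subset hXS] at hS'
  have := card_erase_add_one hAF
  have := card_le_card (hFS A hAF)
  omega

theorem card_le_two_mul_card_sub_one {F : Finset (Finset α)} {S : Finset α} (hF : IsLaminar F)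
    (hFS : ∀ A ∈ F, A ⊆ S) (hF₁ : ∀ A ∈ F, A.Nonempty) : #F ≤ 2 * #S - 1 := by
  have hsplit := card_filter_add_card_filter_not (s := F) (fun A => #A = 1)
  have hsingle : #{A ∈ F | #A = 1} ≤ #S := by
    refine (card_le_card fun A hA => ?_).trans (card_image_le (f := ({·})))
    obtain ⟨hAF, hA⟩ := mem_filter.1 hA
    obtain ⟨a, rfl⟩ := card_eq_one.1 hA
    exact mem_image.2 ⟨a, hFS _ hAF (mem_singleton_self a), rfl⟩
  have hlarge : #{A ∈ F | ¬#A = 1} ≤ #S - 1 :=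
    (hF.subset (filter_subset (fun A => ¬#A = 1) F)).card_le_card_sub_one
      (fun A hA => hFS A (mem_filter.1 hA).1)
      (fun A hA => by
        obtain ⟨hAF, hA⟩ := mem_filter.1 hA
        have := card_pos.2 (hF₁ A hAF)
        omega)
  omega

theorem card_le_two_mul_card_sub_two {F : Finset (Finset α)} {S : Finset α} {a : α}
    (hF : IsLaminar F) (hFS : ∀ A ∈ F, A ⊆ S) (hF₁ : ∀ A ∈ F, A.Nonempty) (ha : a ∈ S)
    (haF : {a} ∉ F) : #F ≤ 2 * #S - 2 := by
  have := (hF.insert_singleton a).card_le_two_mul_card_sub_one (S := S)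
    (by simpa [forall_mem_insert] using ⟨ha, hFS⟩) (by simpa [forall_mem_insert] using hF₁)
  rw [card_insert_of_notMem haF] at this
  omega

end IsLaminar

end Finset

section Tree

variable {V : Type*} {G : SimpleGraph V} {a b r x y : V}

theorem onPath_left : OnPath G a b a := fun p _ => p.start_mem_support

theorem OnPath.symm (h : OnPath G a b x) : OnPath G b a x := fun p hp => by
  simpa using h p.reverse hp.reverse

theorem OnPath.eq_of_self (h : OnPath G a a x) : x = a := by
  simpa using h .nil .nil

namespace SimpleGraph.IsTree

theorem length_eq_dist_of_isPath (hG : G.IsTree) {p : G.Walk a b} (hp : p.IsPath) :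
    p.length = G.dist a b := by
  obtain ⟨q, hq⟩ := hG.connected.exists_walk_length_eq_dist a b
  rw [(hG.existsUnique_path a b).unique hp (q.isPath_of_length_eq_dist hq), hq]

theorem dist_add_dist_of_mem_support (hG : G.IsTree) {p : G.Walk a b} (hp : p.IsPath)
    (hx : x ∈ p.support) : G.dist a x + G.dist x b = G.dist a b := by
  classical
  have hsplit := congrArg Walk.length (p.take_spec hx)
  rw [Walk.length_append] at hsplit
  have := dist_le (p.takeUntil x hx)
  have := dist_le (p.dropUntil x hx)
  have := hG.connected.dist_triangle (u := a) (v := x) (w := b)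
  have := hG.length_eq_dist_of_isPath hp
  omega

theorem onPath_iff (hG : G.IsTree) : OnPath G a b x ↔ G.dist a x + G.dist x b = G.dist a b := by
  obtain ⟨p, hp, -⟩ := hG.existsUnique_path a b
  refine ⟨fun h => hG.dist_add_dist_of_mem_support hp (h p hp), fun h q hq => ?_⟩
  obtain ⟨q₁, h₁⟩ := hG.connected.exists_walk_length_eq_dist a x
  obtain ⟨q₂, h₂⟩ := hG.connected.exists_walk_length_eq_dist x b
  have hpath : (q₁.append q₂).IsPath :=
    (q₁.append q₂).isPath_of_length_eq_dist (by rw [Walk.length_append]; omega)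
  rw [(hG.existsUnique_path a b).unique hq hpath]
  exact (Walk.mem_support_append_iff _ _).2 (.inl q₁.end_mem_support)

theorem onPath_of_mem_support (hG : G.IsTree) {p : G.Walk a b} (hp : p.IsPath)
    (hx : x ∈ p.support) : OnPath G a b x :=
  hG.onPath_iff.2 (hG.dist_add_dist_of_mem_support hp hx)

theorem onPath_trans (hG : G.IsTree) (h₁ : OnPath G r a x) (h₂ : OnPath G r x y) :
    OnPath G r a y := by
  rw [hG.onPath_iff] at *
  have := hG.connected.dist_triangle (u := y) (v := x) (w := a)
  have := hG.connected.dist_triangle (u := r) (v := y) (w := a)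
  omega

theorem onPath_antisymm (hG : G.IsTree) (h₁ : OnPath G r x y) (h₂ : OnPath G r y x) : x = y := by
  rw [hG.onPath_iff] at h₁ h₂
  exact hG.connected.dist_eq_zero_iff.1 (by omega)

theorem onPath_of_onPath_tail (hG : G.IsTree) (h₁ : OnPath G r a y) (h₂ : OnPath G y a x) :
    OnPath G r x y := by
  rw [hG.onPath_iff] at *
  have := hG.connected.dist_triangle (u := r) (v := y) (w := x)
  have := hG.connected.dist_triangle (u := r) (v := x) (w := a)
  omega

theorem onPath_or (hG : G.IsTree) (r : V) (h : OnPath G a b x) :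
    OnPath G r a x ∨ OnPath G r b x := by
  classical
  obtain ⟨p, hp, -⟩ := hG.existsUnique_path r a
  obtain ⟨q, hq, -⟩ := hG.existsUnique_path r b
  have hx := (p.reverse.append q).support_bypass_subset_support
    (h _ (p.reverse.append q).bypass_isPath)
  rcases (Walk.mem_support_append_iff _ _).1 hx with hx | hx
  · exact .inl (hG.onPath_of_mem_support hp (by simpa using hx))
  · exact .inr (hG.onPath_of_mem_support hq hx)

theorem onPath_total (hG : G.IsTree) (hx : OnPath G r a x) (hy : OnPath G r a y) :
    OnPath G r x y ∨ OnPath G r y x :=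
  (hG.onPath_or x hy.symm).symm.imp OnPath.symm (hG.onPath_of_onPath_tail hx)

theorem onPath_of_onPath_of_onPath (hG : G.IsTree) (hx : OnPath G a b x) (ha : OnPath G r a y)
    (hb : OnPath G r b y) : OnPath G r x y :=
  (hG.onPath_or y hx).elim (hG.onPath_of_onPath_tail ha) (hG.onPath_of_onPath_tail hb)

end SimpleGraph.IsTree

theorem SCritical.exists_onPath_root (hG : G.IsTree) {S : Set V} (r : V) (hx : SCritical G S x) :
    ∃ a ∈ S, ∃ b ∈ S, OnPath G r a x ∧ OnPath G r b x ∧ OnPath G a b x := by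
  obtain ⟨s₁, h₁, s₂, h₂, s₃, h₃, h₁₂, h₂₃, h₁₃⟩ := hx
  by_cases hr₁ : OnPath G r s₁ x
  · by_cases hr₂ : OnPath G r s₂ x
    · exact ⟨s₁, h₁, s₂, h₂, hr₁, hr₂, h₁₂⟩
    · exact ⟨s₁, h₁, s₃, h₃, hr₁, (hG.onPath_or r h₂₃).resolve_left hr₂, h₁₃⟩
  · exact ⟨s₂, h₂, s₃, h₃, (hG.onPath_or r h₁₂).resolve_left hr₁,
      (hG.onPath_or r h₁₃).resolve_left hr₁, h₂₃⟩

open Classical in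
noncomputable def descendants (G : SimpleGraph V) (r : V) (S : Finset V) (x : V) : Finset V :=
  {a ∈ S | OnPath G r a x}

theorem mem_descendants {S : Finset V} : a ∈ descendants G r S x ↔ a ∈ S ∧ OnPath G r a x := by
  simp [descendants]

theorem descendants_ne_singleton_root {S : Finset V} (hr : r ∈ S) (hS : S ≠ {r}) :
    descendants G r S x ≠ {r} := by
  intro h
  have hx : x = r := (mem_descendants.1 (h ▸ Finset.mem_singleton_self r)).2.eq_of_self
  subst hx
  refine hS (h ▸ ?_)
  ext a
  simp [mem_descendants, onPath_left]

theorem SCritical.descendants_nonempty (hG : G.IsTree) {S : Finset V}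
    (hx : SCritical G (S : Set V) x) : (descendants G r S x).Nonempty := by
  obtain ⟨a, ha, -, -, hax, -⟩ := hx.exists_onPath_root hG r
  exact ⟨a, mem_descendants.2 ⟨ha, hax⟩⟩

theorem SCritical.onPath_of_descendants_subset (hG : G.IsTree) {S : Finset V}
    (hx : SCritical G (S : Set V) x) (h : descendants G r S x ⊆ descendants G r S y) :
    OnPath G r x y := by
  obtain ⟨a, ha, b, hb, hax, hbx, habx⟩ := hx.exists_onPath_root hG r
  exact hG.onPath_of_onPath_of_onPath habx (mem_descendants.1 (h (mem_descendants.2 ⟨ha, hax⟩))).2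
    (mem_descendants.1 (h (mem_descendants.2 ⟨hb, hbx⟩))).2

theorem SimpleGraph.IsTree.injOn_descendants (hG : G.IsTree) (r : V) (S : Finset V) :
    Set.InjOn (descendants G r S) {x | SCritical G (S : Set V) x} := fun _ hx _ hy h =>
  hG.onPath_antisymm (hx.onPath_of_descendants_subset hG h.le)
    (hy.onPath_of_descendants_subset hG h.ge)

theorem SimpleGraph.IsTree.descendants_subset_or_subset_or_disjoint (hG : G.IsTree) (S : Finset V)
    (x y : V) :
    descendants G r S x ⊆ descendants G r S y ∨ descendants G r S y ⊆ descendants G r S x ∨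
      Disjoint (descendants G r S x) (descendants G r S y) := by
  by_cases hd : Disjoint (descendants G r S x) (descendants G r S y)
  · exact .inr (.inr hd)
  obtain ⟨a, hax, hay⟩ := Finset.not_disjoint_iff.1 hd
  have hsub {x y : V} (h : OnPath G r x y) : descendants G r S x ⊆ descendants G r S y :=
    fun b hb => mem_descendants.2 ⟨(mem_descendants.1 hb).1,
      hG.onPath_trans (mem_descendants.1 hb).2 h⟩
  exact (hG.onPath_total (mem_descendants.1 hax).2 (mem_descendants.1 hay).2).imp hsub
    (fun h => .inl (hsub h))

end Tree

theorem stmt4_general {V : Type*} (G : SimpleGraph V) (hG : G.IsTree)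
    (S : Finset V) (hS : 2 ≤ S.card) :
    {x : V | SCritical G (S : Set V) x}.ncard ≤ 2 * S.card - 2 := by
  classical
  obtain ⟨r, hr⟩ : S.Nonempty := Finset.card_pos.1 (by omega)
  set C := {x : V | SCritical G (S : Set V) x}
  let F : Finset (Finset V) := {A ∈ S.powerset | A ∈ descendants G r S '' C}
  have hF : (F : Set (Finset V)) = descendants G r S '' C := by
    refine Set.ext fun A => ⟨fun h => (Finset.mem_filter.1 h).2, fun h => ?_⟩
    obtain ⟨x, hx, rfl⟩ := h
    exact Finset.mem_filter.2 ⟨Finset.mem_powerset.2 (Finset.filter_subset _ S), x, hx, rfl⟩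
  have hmem {A} (hA : A ∈ F) : ∃ x ∈ C, descendants G r S x = A := by
    rwa [← Finset.mem_coe, hF] at hA
  rw [← (hG.injOn_descendants r S).ncard_image, ← hF, Set.ncard_coe_finset]
  refine Finset.IsLaminar.card_le_two_mul_card_sub_two (a := r) ?_
    (fun A hA => Finset.mem_powerset.1 (Finset.mem_filter.1 hA).1) ?_ hr ?_
  · intro A hA B hB
    obtain ⟨x, -, rfl⟩ := hmem hA
    obtain ⟨y, -, rfl⟩ := hmem hB
    exact hG.descendants_subset_or_subset_or_disjoint S x y
  · intro A hA
    obtain ⟨x, hx, rfl⟩ := hmem hA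
    exact hx.descendants_nonempty hG
  · intro h
    obtain ⟨x, -, hx⟩ := hmem h
    exact descendants_ne_singleton_root hr (fun h => by simp [h] at hS) hx

/-- In a tree `T` with a subset `S` of vertices (`|S| ≥ 2`), the number of `S`-critical
nodes is at most `2|S| - 2`. -/
theorem stmt4 {V : Type*} [Fintype V] (G : SimpleGraph V) (hG : G.IsTree)
    (S : Finset V) (hS : 2 ≤ S.card) :
    {x : V | SCritical G (S : Set V) x}.ncard ≤ 2 * S.card - 2 :=
  stmt4_general G hG S hS
end

section
/- Let T be a tree, S a subset of vertices, and x an S-contractible node of T. Then x lies on a path between two S-critical-or-S-boundary nodes, and the maximal path of S-contractible nodes containing x has all internal nodes of degree 2 in the subtree of T induced by non-S-disposable nodes. -/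
/-- `x` is `S`-disposable: `x` lies on no path between two vertices of `S`. -/
def SDisposable {V : Type*} (G : SimpleGraph V) (S : Set V) (x : V) : Prop :=
  ∀ s₁ ∈ S, ∀ s₂ ∈ S, ¬ OnPath G s₁ s₂ x

/-- `x` is `S`-contractible: on some path between vertices of `S`, but not critical. -/
def SContractible {V : Type*} (G : SimpleGraph V) (S : Set V) (x : V) : Prop :=
  (∃ s₁ ∈ S, ∃ s₂ ∈ S, OnPath G s₁ s₂ x) ∧ ¬ SCritical G S x

/-!
A contractible node `y` is an inner node of a path `s₁ ↔ s₂` with `sᵢ ∈ S`, so its two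
neighbours on that path are non-disposable. A third non-disposable neighbour `z` would lie on
some path `t₁ ↔ t₂` with `tᵢ ∈ S`, hence on the path from some `t ∈ S` to `y`. In a tree, the
branches at `y` through distinct neighbours are disjoint, so `y` would lie on all three paths
between `s₁`, `s₂` and `t`, i.e. `y` would be critical.
-/

namespace SimpleGraph

variable {V : Type*} {G : SimpleGraph V} {S : Set V} {a b c d x y z : V}

def ReachableAvoiding (G : SimpleGraph V) (x a b : V) : Prop :=
  ∃ w : G.Walk a b, x ∉ w.support

theorem ReachableAvoiding.symm (h : G.ReachableAvoiding x a b) : G.ReachableAvoiding x b a := by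
  obtain ⟨w, hw⟩ := h
  exact ⟨w.reverse, by simpa using hw⟩

theorem ReachableAvoiding.trans (hab : G.ReachableAvoiding x a b)
    (hbc : G.ReachableAvoiding x b c) : G.ReachableAvoiding x a c := by
  obtain ⟨u, hu⟩ := hab
  obtain ⟨v, hv⟩ := hbc
  exact ⟨u.append v, by simp [Walk.mem_support_append_iff, hu, hv]⟩

theorem onPath_iff_not_reachableAvoiding : OnPath G a b x ↔ ¬ G.ReachableAvoiding x a b := by
  classical
  constructor
  · rintro h ⟨w, hw⟩
    exact hw (w.support_bypass_subset_support (h w.bypass w.bypass_isPath))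
  · intro h p _
    by_contra hx
    exact h ⟨p, hx⟩

theorem onPath_left : OnPath G a b a := fun p _ => p.start_mem_support

theorem _root_.OnPath.onPath_or_onPath (h : OnPath G a b x) (c : V) :
    OnPath G a c x ∨ OnPath G b c x := by
  simp only [onPath_iff_not_reachableAvoiding] at h ⊢
  by_contra! hc
  exact h (hc.1.trans hc.2.symm)

theorem IsAcyclic.onPath_of_mem_support (hG : G.IsAcyclic) {p : G.Walk a b} (hp : p.IsPath)
    (hx : x ∈ p.support) : OnPath G a b x := by
  intro q hq
  obtain rfl : q = p := congrArg Subtype.val ((hG.subsingleton_path a b).elim ⟨q, hq⟩ ⟨p, hp⟩)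
  exact hx

theorem IsAcyclic.not_reachableAvoiding_of_adj (hG : G.IsAcyclic) (hc : G.Adj x c)
    (hd : G.Adj x d) (hcd : c ≠ d) : ¬ G.ReachableAvoiding x c d := by
  classical
  rintro ⟨w, hw⟩
  have hpath : w.bypass = Walk.cons hc.symm (Walk.cons hd Walk.nil) := congrArg Subtype.val
    ((hG.subsingleton_path c d).elim ⟨w.bypass, w.bypass_isPath⟩
      ⟨_, by simp [hc.ne', hd.ne, hcd]⟩)
  exact hw (w.support_bypass_subset_support (by simp [hpath]))

theorem IsAcyclic.onPath_of_adj (hG : G.IsAcyclic) (hc : G.Adj y c) (hd : G.Adj y d)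
    (hcd : c ≠ d) (hca : G.ReachableAvoiding y c a) (hdb : G.ReachableAvoiding y d b) :
    OnPath G a b y :=
  onPath_iff_not_reachableAvoiding.2 fun hab =>
    hG.not_reachableAvoiding_of_adj hc hd hcd (hca.trans (hab.trans hdb.symm))

theorem reachableAvoiding_of_mem_support {p : G.Walk a y} (hp : p.IsPath) (hz : z ∈ p.support)
    (hzy : z ≠ y) : G.ReachableAvoiding y z a := by
  classical
  exact ⟨(p.takeUntil z hz).reverse, by
    simpa using Walk.endpoint_notMem_support_takeUntil hp hz hzy.symm⟩

theorem exists_adj_reachableAvoiding_of_mem_support {p : G.Walk a b} (hp : p.IsPath)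
    (hy : y ∈ p.support) (hya : y ≠ a) :
    ∃ z ∈ p.support, G.Adj y z ∧ G.ReachableAvoiding y z a := by
  classical
  set q := p.takeUntil y hy
  have hq : ¬ q.Nil := Walk.not_nil_of_ne hya.symm
  have hzy : G.Adj q.penultimate y := Walk.adj_penultimate hq
  refine ⟨q.penultimate, p.support_takeUntil_subset_support hy (q.getVert_mem_support _),
    hzy.symm, ?_⟩
  exact reachableAvoiding_of_mem_support (hp.takeUntil hy) (q.getVert_mem_support _) hzy.ne

theorem exists_reachableAvoiding_of_not_sDisposable (hG : G.Connected)
    (hz : ¬ SDisposable G S z) (hzy : z ≠ y) : ∃ t ∈ S, G.ReachableAvoiding y z t := by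
  simp only [SDisposable, not_forall, not_not] at hz
  obtain ⟨t₁, ht₁, t₂, ht₂, hz⟩ := hz
  obtain ⟨t, ht, hty⟩ : ∃ t ∈ S, OnPath G t y z := by
    rcases hz.onPath_or_onPath y with h | h
    exacts [⟨t₁, ht₁, h⟩, ⟨t₂, ht₂, h⟩]
  obtain ⟨p, hp⟩ := hG.preconnected.exists_isPath t y
  exact ⟨t, ht, reachableAvoiding_of_mem_support hp (hty p hp) hzy⟩

theorem sCritical_of_mem (hx : x ∈ S) : SCritical G S x :=
  ⟨x, hx, x, hx, x, hx, onPath_left, onPath_left, onPath_left⟩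

theorem IsAcyclic.sCritical_of_three_branches (hG : G.IsAcyclic) {z₁ z₂ z₃ s₁ s₂ s₃ : V}
    (h₁ : G.Adj y z₁) (h₂ : G.Adj y z₂) (h₃ : G.Adj y z₃)
    (h₁₂ : z₁ ≠ z₂) (h₂₃ : z₂ ≠ z₃) (h₁₃ : z₁ ≠ z₃)
    (hs₁ : s₁ ∈ S) (hs₂ : s₂ ∈ S) (hs₃ : s₃ ∈ S) (hr₁ : G.ReachableAvoiding y z₁ s₁)
    (hr₂ : G.ReachableAvoiding y z₂ s₂) (hr₃ : G.ReachableAvoiding y z₃ s₃) :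
    SCritical G S y :=
  ⟨s₁, hs₁, s₂, hs₂, s₃, hs₃, hG.onPath_of_adj h₁ h₂ h₁₂ hr₁ hr₂,
    hG.onPath_of_adj h₂ h₃ h₂₃ hr₂ hr₃, hG.onPath_of_adj h₁ h₃ h₁₃ hr₁ hr₃⟩

theorem IsTree.ncard_adj_not_sDisposable_of_sContractible (hG : G.IsTree)
    (hy : SContractible G S y) : {z : V | ¬ SDisposable G S z ∧ G.Adj y z}.ncard = 2 := by
  obtain ⟨⟨s₁, hs₁, s₂, hs₂, hon⟩, hncrit⟩ := hy
  have hyS : y ∉ S := fun h => hncrit (sCritical_of_mem h)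
  obtain ⟨p, hp⟩ := hG.1.preconnected.exists_isPath s₁ s₂
  have hyp : y ∈ p.support := hon p hp
  obtain ⟨z₁, hz₁p, h₁, hr₁⟩ :=
    exists_adj_reachableAvoiding_of_mem_support hp hyp (ne_of_mem_of_not_mem hs₁ hyS).symm
  obtain ⟨z₂, hz₂p, h₂, hr₂⟩ := exists_adj_reachableAvoiding_of_mem_support hp.reverse
    (by simpa using hyp) (ne_of_mem_of_not_mem hs₂ hyS).symm
  rw [Walk.support_reverse, List.mem_reverse] at hz₂p
  have h₁₂ : z₁ ≠ z₂ := by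
    rintro rfl
    exact onPath_iff_not_reachableAvoiding.1 hon (hr₁.symm.trans hr₂)
  suffices hset : {z : V | ¬ SDisposable G S z ∧ G.Adj y z} = {z₁, z₂} by
    rw [hset, Set.ncard_pair h₁₂]
  ext z
  simp only [Set.mem_ofPred_eq, Set.mem_insert_iff, Set.mem_singleton_iff]
  constructor
  · rintro ⟨hz, h₃⟩
    by_contra! hne
    obtain ⟨t, ht, hr₃⟩ := exists_reachableAvoiding_of_not_sDisposable hG.1 hz h₃.ne'
    exact hncrit (hG.2.sCritical_of_three_branches h₁ h₂ h₃ h₁₂ (Ne.symm hne.2) (Ne.symm hne.1)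
      hs₁ hs₂ ht hr₁ hr₂ hr₃)
  · have not_sDisposable_of_mem {w : V} (hw : w ∈ p.support) : ¬ SDisposable G S w :=
      fun hd => hd s₁ hs₁ s₂ hs₂ (hG.2.onPath_of_mem_support hp hw)
    rintro (rfl | rfl)
    exacts [⟨not_sDisposable_of_mem hz₁p, h₁⟩, ⟨not_sDisposable_of_mem hz₂p, h₂⟩]

end SimpleGraph

theorem stmt6_general {V : Type*} (G : SimpleGraph V) (hG : G.IsTree)
    (S : Set V) (x : V) (hx : SContractible G S x) :
    (∃ a b : V, (SCritical G S a ∨ a ∈ S) ∧ (SCritical G S b ∨ b ∈ S) ∧ OnPath G a b x) ∧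
      ∀ y : V, SContractible G S y →
        {z : V | ¬ SDisposable G S z ∧ G.Adj y z}.ncard = 2 := by
  obtain ⟨⟨s₁, hs₁, s₂, hs₂, hon⟩, -⟩ := hx
  exact ⟨⟨s₁, s₂, Or.inr hs₁, Or.inr hs₂, hon⟩,
    fun _ hy => hG.ncard_adj_not_sDisposable_of_sContractible hy⟩

/-- An `S`-contractible node `x` of a tree lies on a path between two nodes that are
`S`-critical or in `S`, and every node of a maximal path of `S`-contractible nodes
(i.e. every `S`-contractible node) has degree exactly 2 in the subtree induced by the
non-`S`-disposable nodes (the union of all paths between vertices of `S`). -/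
theorem stmt6 {V : Type*} [Fintype V] (G : SimpleGraph V) (hG : G.IsTree)
    (S : Set V) (x : V) (hx : SContractible G S x) :
    (∃ a b : V, (SCritical G S a ∨ a ∈ S) ∧ (SCritical G S b ∨ b ∈ S) ∧ OnPath G a b x) ∧
      ∀ y : V, SContractible G S y →
        {z : V | ¬ SDisposable G S z ∧ G.Adj y z}.ncard = 2 :=
  stmt6_general G hG S x hx
end

section
/- In a rooted tree ordered so that the children of each node are sorted by decreasing rank, where rank(c) = ⌊log₂ s(c)⌋, if a node u has a heavy child c (i.e., s(c) > s(u)/2), then c is among the first 2 children of u in this order. -/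
/-! Ranks are `⌊log₂ s⌋`, so two children whose rank is at least that of `c` are each larger than
`s c / 2`. If neither is `c`, then together with `c` their sizes add up to more than `2 · s c`,
which exceeds `s u` when `c` is heavy. -/

lemma Nat.lt_mul_of_log_le {b s t : ℕ} (hb : 1 < b) (hs : s ≠ 0) (h : Nat.log b t ≤ Nat.log b s) :
    t < b * s :=
  calc t < b ^ (Nat.log b t + 1) := Nat.lt_pow_succ_log_self hb t
    _ ≤ b ^ (Nat.log b s + 1) := Nat.pow_le_pow_right (by omega) (by omega)
    _ = b * b ^ Nat.log b s := by ring
    _ ≤ b * s := Nat.mul_le_mul_left b (Nat.pow_log_le_self b hs)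

lemma List.exists_eq_cons_cons_of_mem_of_not_mem_take_two {α : Type*} {l : List α} {c : α}
    (hc : c ∈ l) (h : c ∉ l.take 2) : ∃ a b t, l = a :: b :: t ∧ c ∈ t := by
  match l with
  | [] => simp at hc
  | [_] => exact absurd hc h
  | a :: b :: t => exact ⟨a, b, t, rfl, by simp_all⟩

theorem stmt9_general {ι : Type*} (s : ι → ℕ) (su : ℕ) (L : List ι)
    (hpos : ∀ c ∈ L, 1 ≤ s c)
    (hsum : (L.map s).sum ≤ su)
    (hsort : L.Pairwise (fun a b => Nat.log 2 (s b) ≤ Nat.log 2 (s a)))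
    (c : ι) (hc : c ∈ L) (hheavy : su < 2 * s c) :
    c ∈ L.take 2 := by
  by_contra hnot
  obtain ⟨a, b, t, rfl, hct⟩ := List.exists_eq_cons_cons_of_mem_of_not_mem_take_two hc hnot
  have hca : s c < 2 * s a := Nat.lt_mul_of_log_le one_lt_two
    (Nat.one_le_iff_ne_zero.mp (hpos a (by simp))) (List.rel_of_pairwise_cons hsort (by simp [hct]))
  have hcb : s c < 2 * s b := Nat.lt_mul_of_log_le one_lt_two
    (Nat.one_le_iff_ne_zero.mp (hpos b (by simp))) (List.rel_of_pairwise_cons hsort.of_cons hct)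
  have hct_le : s c ≤ (t.map s).sum := List.le_sum_of_mem (List.mem_map_of_mem hct)
  simp only [List.map_cons, List.sum_cons] at hsum
  omega

/-- Let the children of a node `u` be listed in order of decreasing rank, where
`rank c = ⌊log₂ (s c)⌋`, all subtree sizes are positive, and
`s u ≥ Σ_{c child of u} s c`.  If `c` is a heavy child (`s c > s u / 2`),
then `c` is among the first 2 children in this order. -/
theorem stmt9 {ι : Type*} (s : ι → ℕ) (su : ℕ) (L : List ι)
    (hnd : L.Nodup)
    (hpos : ∀ c ∈ L, 1 ≤ s c)
    (hsum : (L.map s).sum ≤ su)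
    (hsort : L.Pairwise (fun a b => Nat.log 2 (s b) ≤ Nat.log 2 (s a)))
    (c : ι) (hc : c ∈ L) (hheavy : su < 2 * s c) :
    c ∈ L.take 2 :=
  stmt9_general s su L hpos hsum hsort c hc hheavy
end

section
/- If a child c of u is heavy (s(c) > s(u)/2) and another child c' of u has rank(c') ≥ rank(c) where rank(x)=⌊log₂ s(x)⌋, then s(c') > s(c)/2; consequently at most one child besides the heavy child can have rank ≥ rank(c). -/
/-!
A number `n` is less than `2 ^ (log₂ n + 1) = 2 ^ log₂ n + 2 ^ log₂ n`, and every positive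
number of rank at least `log₂ n` is at least `2 ^ log₂ n`. So any two children (possibly the same
one twice) of rank at least `rank c` have total size exceeding `s c`; the heavy child's siblings,
however, have total size less than `s c`.
-/

theorem Nat.lt_add_of_log_le_log {n a b : ℕ} (ha : a ≠ 0) (hb : b ≠ 0)
    (hna : Nat.log 2 n ≤ Nat.log 2 a) (hnb : Nat.log 2 n ≤ Nat.log 2 b) : n < a + b :=
  calc n < 2 ^ (Nat.log 2 n + 1) := Nat.lt_pow_succ_log_self one_lt_two n
    _ = 2 ^ Nat.log 2 n + 2 ^ Nat.log 2 n := by rw [pow_succ, mul_two]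
    _ ≤ a + b := add_le_add (Nat.pow_le_of_le_log ha hna) (Nat.pow_le_of_le_log hb hnb)

theorem Finset.sum_erase_lt_of_sum_lt_two_mul {ι M : Type*} [DecidableEq ι] [AddCommMonoid M]
    [PartialOrder M] [IsOrderedCancelAddMonoid M] {f : ι → M} {s : Finset ι} {i : ι}
    (hi : i ∈ s) (h : ∑ x ∈ s, f x < 2 • f i) : ∑ x ∈ s.erase i, f x < f i := by
  rw [← Finset.add_sum_erase s f hi, two_nsmul] at h
  exact lt_of_add_lt_add_left h

/-- If `c` is a heavy child of `u` (`s c > s u / 2`, sizes positive integers with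
`Σ_{children} s ≤ s u`) and another child `c'` has `rank c' ≥ rank c` where
`rank x = ⌊log₂ (s x)⌋`, then `s c' > s c / 2`; consequently at most one child
besides the heavy child `c` can have rank at least `rank c`. -/
theorem stmt10 {ι : Type*} [DecidableEq ι] (s : ι → ℕ) (su : ℕ) (C : Finset ι)
    (hpos : ∀ x ∈ C, 1 ≤ s x)
    (hsum : ∑ x ∈ C, s x ≤ su)
    (c : ι) (hc : c ∈ C) (hheavy : su < 2 * s c) :
    (∀ c' ∈ C, Nat.log 2 (s c) ≤ Nat.log 2 (s c') → s c < 2 * s c') ∧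
      (C.filter (fun c' => c' ≠ c ∧ Nat.log 2 (s c) ≤ Nat.log 2 (s c'))).card ≤ 1 := by
  have hne : ∀ x ∈ C, s x ≠ 0 := fun x hx => Nat.one_le_iff_ne_zero.mp (hpos x hx)
  refine ⟨fun c' hc' hlog => ?_, Finset.card_le_one.mpr fun a ha b hb => ?_⟩
  · rw [two_mul]
    exact Nat.lt_add_of_log_le_log (hne c' hc') (hne c' hc') hlog hlog
  · simp only [Finset.mem_filter] at ha hb
    obtain ⟨haC, hac, haL⟩ := ha
    obtain ⟨hbC, hbc, hbL⟩ := hb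
    by_contra hab
    have hsiblings : ∑ x ∈ C.erase c, s x < s c :=
      Finset.sum_erase_lt_of_sum_lt_two_mul hc (by rw [smul_eq_mul]; omega)
    have hpair : s a + s b ≤ ∑ x ∈ C.erase c, s x :=
      Finset.add_le_sum (fun _ _ => Nat.zero_le _) (Finset.mem_erase.mpr ⟨hac, haC⟩)
        (Finset.mem_erase.mpr ⟨hbc, hbC⟩) hab
    have := Nat.lt_add_of_log_le_log (hne a haC) (hne b hbC) haL hbL
    omega
end

section
/- In any tree obtained from a star with a white center and B black leaves by a sequence of operations that never creates a white leaf nor two adjacent white nodes of degree 2, the number of white nodes is at most 4·b − 5, where b ≥ 2 is the number of black nodes; in particular the tree has O(b) nodes. -/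
/-!
Leaves are black, and a tree has at least two more leaves than vertices of degree at least
three, so at most `b - 2` white vertices have degree at least three. The white vertices of
degree two form an independent set, so their `2s` incident edges are distinct and
`2s < n = b + s + t`. Together these give `w = s + t ≤ 3b - 5`.
-/

open Finset

namespace SimpleGraph

variable {V : Type*} [Fintype V] {G : SimpleGraph V} [DecidableRel G.Adj]

theorem IsIndepSet.sum_degree_le_card_edgeFinset [DecidableEq V] {s : Finset V}
    (hs : G.IsIndepSet (s : Set V)) : ∑ v ∈ s, G.degree v ≤ #G.edgeFinset := by
  have hdisj : (s : Set V).PairwiseDisjoint (G.incidenceFinset ·) := by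
    intro u hu v hv huv
    refine Finset.disjoint_left.2 fun e heu hev => hs hu hv huv ?_
    rw [mem_incidenceFinset] at heu hev
    exact G.adj_of_mem_incidenceSet huv heu hev
  calc ∑ v ∈ s, G.degree v = #(s.biUnion (G.incidenceFinset ·)) := by
        simp only [card_biUnion hdisj, card_incidenceFinset_eq_degree]
    _ ≤ #G.edgeFinset := card_le_card (biUnion_subset.2 fun v _ => G.incidenceFinset_subset v)

theorem IsTree.mul_card_lt_card_of_isIndepSet [DecidableEq V] (hG : G.IsTree) {s : Finset V}
    (hs : G.IsIndepSet (s : Set V)) {k : ℕ} (hk : ∀ v ∈ s, k ≤ G.degree v) :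
    k * #s < Fintype.card V := by
  have hsum : #s * k ≤ ∑ v ∈ s, G.degree v := card_nsmul_le_sum s _ k hk
  have := hs.sum_degree_le_card_edgeFinset
  have := hG.card_edgeFinset
  rw [mul_comm] at hsum
  omega

theorem IsTree.card_branching_add_two_le_card_leaves [Nontrivial V] (hG : G.IsTree) :
    #{v | 3 ≤ G.degree v} + 2 ≤ #{v | G.degree v = 1} := by
  have hpos (v : V) : 0 < G.degree v := hG.connected.preconnected.degree_pos_of_nontrivial v
  have hsum : ∑ v, ((G.degree v : ℤ) - 2) = -2 := by
    have := hG.card_edgeFinset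
    rw [sum_sub_distrib, ← Nat.cast_sum, sum_degrees_eq_twice_card_edges, sum_const, card_univ]
    push_cast [← this]
    ring
  have hle : ∑ v, ((if 3 ≤ G.degree v then 1 else 0) - (if G.degree v = 1 then 1 else 0) : ℤ) ≤
      ∑ v, ((G.degree v : ℤ) - 2) :=
    sum_le_sum fun v _ => by have := hpos v; split_ifs <;> omega
  rw [sum_sub_distrib, sum_boole, sum_boole, hsum] at hle
  omega

end SimpleGraph

open SimpleGraph

/-- In a tree with black/white nodes in which every white node has degree ≥ 2 and no
two adjacent white nodes both have degree 2, if there are `b ≥ 2` black nodes then the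
number of white nodes is at most `4·b − 5` (in particular, `O(b)` nodes in total). -/
theorem stmt11 {V : Type*} [Fintype V] [DecidableEq V] (G : SimpleGraph V)
    [DecidableRel G.Adj] (hG : G.IsTree) (color : V → Bool)
    (hwdeg : ∀ v, color v = false → 2 ≤ G.degree v)
    (hnoadj : ∀ u v, G.Adj u v → color u = false → color v = false →
      ¬(G.degree u = 2 ∧ G.degree v = 2))
    (hb : 2 ≤ (Finset.univ.filter (fun v => color v = true)).card) :
    (Finset.univ.filter (fun v => color v = false)).card ≤
      4 * (Finset.univ.filter (fun v => color v = true)).card - 5 := by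
  set B := univ.filter (fun v => color v = true)
  set W := univ.filter (fun v => color v = false)
  set S := W.filter (fun v => G.degree v = 2)
  set T := W.filter (fun v => ¬G.degree v = 2)
  have hBW : #B + #W = Fintype.card V := by
    simpa [B, W] using card_filter_add_card_filter_not (s := univ) (fun v => color v = true)
  have hST : #S + #T = #W := card_filter_add_card_filter_not _
  have : Nontrivial V := Fintype.one_lt_card_iff_nontrivial.1 (by omega)
  have hS : 2 * #S < Fintype.card V := by
    refine hG.mul_card_lt_card_of_isIndepSet (fun u hu v hv _ huv => ?_)
      fun v hv => (mem_filter.1 hv).2.ge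
    simp only [S, W, coe_filter, mem_filter, mem_univ, true_and, Set.mem_ofPred_eq] at hu hv
    exact hnoadj u v huv hu.1 hv.1 ⟨hu.2, hv.2⟩
  have hT : #T + 2 ≤ #B := calc
    #T + 2 ≤ #({v | 3 ≤ G.degree v} : Finset V) + 2 := by
      gcongr
      intro v hv
      simp only [T, W, mem_filter, mem_univ, true_and] at hv ⊢
      have := hwdeg v hv.1
      omega
    _ ≤ #({v | G.degree v = 1} : Finset V) := hG.card_branching_add_two_le_card_leaves
    _ ≤ #B := card_le_card fun v hv => by
      simp only [B, mem_filter, mem_univ, true_and] at hv ⊢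
      by_contra hc
      have := hwdeg v (by simpa using hc)
      omega
  omega
end

section
/- In a graph where every vertex has degree at most 3, two vertices are 2-edge-connected if and only if they are biconnected; moreover every cutvertex of such a graph is incident to a bridge. -/
open SimpleGraph

/-- `u` and `v` are 2-edge-connected: connected, and no single edge removal
disconnects them. -/
def TwoEdgeConnected {V : Type*} (G : SimpleGraph V) (u v : V) : Prop :=
  G.Reachable u v ∧ ∀ e ∈ G.edgeSet, (G.deleteEdges {e}).Reachable u v

/-- `u` and `v` are biconnected: 2-edge-connected, and no removal of a single vertex
other than `u`, `v` disconnects them. -/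
def Biconnected13 {V : Type*} (G : SimpleGraph V) (u v : V) : Prop :=
  TwoEdgeConnected G u v ∧
    ∀ w, ∀ (hu : u ≠ w) (hv : v ≠ w),
      (G.induce {x | x ≠ w}).Reachable ⟨u, hu⟩ ⟨v, hv⟩

/-- `w` is a cutvertex of `G`: its removal disconnects some pair of other vertices. -/
def IsCutvertex {V : Type*} (G : SimpleGraph V) (w : V) : Prop :=
  ∃ u v : V, u ≠ w ∧ v ≠ w ∧ G.Reachable u v ∧
    ∀ (hu : u ≠ w) (hv : v ≠ w), ¬ (G.induce {x | x ≠ w}).Reachable ⟨u, hu⟩ ⟨v, hv⟩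

/-!
Suppose `w` separates `u` from `v`. The neighbours of `w` that `u` reaches without passing
through `w` are disjoint from those that `v` reaches that way, and both sets are nonempty since
a `u`–`v` walk has to enter `w` from each side. As `w` has at most three neighbours, one of
these sets is a singleton `{x}`; every walk leaving that side then uses the edge `xw`, which is
therefore a bridge separating `u` from `v`.
-/

open Finset

namespace SimpleGraph

variable {V : Type*} (G : SimpleGraph V)

def reachableAvoiding (w u : V) : Set V :=
  {x | ∃ (hu : u ≠ w) (hx : x ≠ w),
    (G.induce {z | z ≠ w}).Reachable ⟨u, hu⟩ ⟨x, hx⟩}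

variable {G} {u v w x : V}

lemma mem_reachableAvoiding_self (hu : u ≠ w) : u ∈ G.reachableAvoiding w u :=
  ⟨hu, hu, .rfl⟩

lemma notMem_reachableAvoiding_center : w ∉ G.reachableAvoiding w u :=
  fun ⟨_, hw, _⟩ ↦ hw rfl

lemma mem_reachableAvoiding_of_adj ⦃a b : V⦄ (ha : a ∈ G.reachableAvoiding w u)
    (hab : G.Adj a b) (hb : b ≠ w) : b ∈ G.reachableAvoiding w u := by
  obtain ⟨hu, haw, hr⟩ := ha
  have hab' : (G.induce {z | z ≠ w}).Adj ⟨a, haw⟩ ⟨b, hb⟩ := induce_adj.2 hab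
  exact ⟨hu, hb, hr.trans hab'.reachable⟩

lemma notMem_reachableAvoiding {hu : u ≠ w} {hv : v ≠ w}
    (hsep : ¬ (G.induce {z | z ≠ w}).Reachable ⟨u, hu⟩ ⟨v, hv⟩) :
    v ∉ G.reachableAvoiding w u :=
  fun ⟨_, _, hr⟩ ↦ hsep hr

lemma disjoint_reachableAvoiding {hu : u ≠ w} {hv : v ≠ w}
    (hsep : ¬ (G.induce {z | z ≠ w}).Reachable ⟨u, hu⟩ ⟨v, hv⟩) :
    Disjoint (G.reachableAvoiding w u) (G.reachableAvoiding w v) :=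
  Set.disjoint_left.2 fun _ ⟨_, _, hu'⟩ ⟨_, _, hv'⟩ ↦ hsep (hu'.trans hv'.symm)

namespace Walk

variable {C : Set V}

theorem exists_mem_edges_of_mem_of_notMem
    (hC : ∀ ⦃x y⦄, x ∈ C → G.Adj x y → y ≠ w → y ∈ C) {a b : V} (p : G.Walk a b)
    (ha : a ∈ C) (hb : b ∉ C) : ∃ y ∈ C, s(y, w) ∈ p.edges := by
  induction p with
  | nil => exact absurd ha hb
  | @cons a c b hac p ih =>
    by_cases hc : c = w
    · subst hc
      exact ⟨a, ha, by simp⟩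
    · obtain ⟨y, hy, hye⟩ := ih (hC ha hac hc) hb
      exact ⟨y, hy, by simp [hye]⟩

theorem mem_edges_of_unique_adj (hC : ∀ ⦃x y⦄, x ∈ C → G.Adj x y → y ≠ w → y ∈ C)
    (huniq : ∀ y ∈ C, G.Adj y w → y = x) {a b : V} (p : G.Walk a b) (ha : a ∈ C)
    (hb : b ∉ C) : s(x, w) ∈ p.edges := by
  obtain ⟨y, hy, hye⟩ := p.exists_mem_edges_of_mem_of_notMem hC ha hb
  rwa [huniq y hy (p.adj_of_mem_edges hye)] at hye

end Walk

section UniqueAdj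

variable {C : Set V} (hC : ∀ ⦃x y⦄, x ∈ C → G.Adj x y → y ≠ w → y ∈ C)
  (huniq : ∀ y ∈ C, G.Adj y w → y = x)
include hC huniq

theorem isBridge_of_unique_adj (hx : x ∈ C) (hw : w ∉ C) : G.IsBridge s(x, w) :=
  isBridge_iff_forall_walk_mem_edges.2 fun p ↦ p.mem_edges_of_unique_adj hC huniq hx hw

theorem not_reachable_deleteEdges_of_unique_adj {a b : V} (ha : a ∈ C) (hb : b ∉ C) :
    ¬ (G.deleteEdges {s(x, w)}).Reachable a b := by
  rw [reachable_deleteEdges_iff_exists_walk]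
  rintro ⟨p, hp⟩
  exact hp (p.mem_edges_of_unique_adj hC huniq ha hb)

end UniqueAdj

variable [Fintype (G.neighborSet w)]

theorem filter_mem_reachableAvoiding_nonempty [DecidablePred (· ∈ G.reachableAvoiding w u)]
    (hu : u ≠ w) (huv : G.Reachable u v) (hv : v ∉ G.reachableAvoiding w u) :
    ((G.neighborFinset w).filter (· ∈ G.reachableAvoiding w u)).Nonempty := by
  obtain ⟨p⟩ := huv
  obtain ⟨y, hy, hye⟩ := p.exists_mem_edges_of_mem_of_notMem
    mem_reachableAvoiding_of_adj (mem_reachableAvoiding_self hu) hv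
  exact ⟨y, mem_filter.2 ⟨(mem_neighborFinset ..).2 (p.adj_of_mem_edges hye).symm, hy⟩⟩

theorem exists_isBridge_of_card_filter_eq_one
    [DecidablePred (· ∈ G.reachableAvoiding w u)] (hv : v ∉ G.reachableAvoiding w u)
    (h : #((G.neighborFinset w).filter (· ∈ G.reachableAvoiding w u)) = 1) :
    ∃ e ∈ G.edgeSet, w ∈ e ∧ G.IsBridge e ∧ ¬ (G.deleteEdges {e}).Reachable u v := by
  obtain ⟨x, hx⟩ := card_eq_one.1 h
  obtain ⟨hxN, huniq⟩ := eq_singleton_iff_unique_mem.1 hx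
  obtain ⟨hwx, hxC⟩ := mem_filter.1 hxN
  have huniq' : ∀ y ∈ G.reachableAvoiding w u, G.Adj y w → y = x := fun y hy hyw ↦
    huniq y (mem_filter.2 ⟨(mem_neighborFinset ..).2 hyw.symm, hy⟩)
  have hu : u ∈ G.reachableAvoiding w u := mem_reachableAvoiding_self hxC.1
  refine ⟨s(x, w), ((mem_neighborFinset ..).1 hwx).symm, Sym2.mem_mk_right x w,
    isBridge_of_unique_adj mem_reachableAvoiding_of_adj huniq' hxC notMem_reachableAvoiding_center,
    not_reachable_deleteEdges_of_unique_adj mem_reachableAvoiding_of_adj huniq' hu hv⟩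

theorem exists_isBridge_of_not_reachable_induce (hdeg : G.degree w ≤ 3) (hu : u ≠ w)
    (hv : v ≠ w) (huv : G.Reachable u v)
    (hsep : ¬ (G.induce {z | z ≠ w}).Reachable ⟨u, hu⟩ ⟨v, hv⟩) :
    ∃ e ∈ G.edgeSet, w ∈ e ∧ G.IsBridge e ∧ ¬ (G.deleteEdges {e}).Reachable u v := by
  classical
  set N : V → Finset V := fun a ↦ (G.neighborFinset w).filter (· ∈ G.reachableAvoiding w a)
  have hvu : v ∉ G.reachableAvoiding w u := notMem_reachableAvoiding hsep
  have huv' : u ∉ G.reachableAvoiding w v := notMem_reachableAvoiding fun h ↦ hsep h.symm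
  have hNu : 0 < #(N u) := (filter_mem_reachableAvoiding_nonempty hu huv hvu).card_pos
  have hNv : 0 < #(N v) := (filter_mem_reachableAvoiding_nonempty hv huv.symm huv').card_pos
  have hN : #(N u) + #(N v) ≤ 3 := calc
    #(N u) + #(N v) = #(N u ∪ N v) :=
      (card_union_of_disjoint (disjoint_filter.2 fun _ _ hy ↦
        Set.disjoint_left.1 (disjoint_reachableAvoiding hsep) hy)).symm
    _ ≤ #(G.neighborFinset w) :=
      card_le_card (union_subset (filter_subset _ _) (filter_subset _ _))
    _ ≤ 3 := by rwa [card_neighborFinset_eq_degree]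
  rcases (by omega : #(N u) = 1 ∨ #(N v) = 1) with h | h
  · exact exists_isBridge_of_card_filter_eq_one hvu h
  · obtain ⟨e, he, hwe, hb, hr⟩ := exists_isBridge_of_card_filter_eq_one huv' h
    exact ⟨e, he, hwe, hb, fun h ↦ hr h.symm⟩

end SimpleGraph

/-- In a graph with maximum degree 3, two vertices are 2-edge-connected iff they are
biconnected; moreover every cutvertex is incident to a bridge. -/
theorem stmt13 {V : Type*} [Fintype V] (G : SimpleGraph V) [DecidableRel G.Adj]
    (hdeg : ∀ v, G.degree v ≤ 3) :
    (∀ u v : V, TwoEdgeConnected G u v ↔ Biconnected13 G u v) ∧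
      (∀ w : V, IsCutvertex G w → ∃ e ∈ G.edgeSet, w ∈ e ∧ G.IsBridge e) := by
  refine ⟨fun u v ↦ ⟨fun h ↦ ⟨h, fun w hu hv ↦ ?_⟩, And.left⟩, ?_⟩
  · by_contra hsep
    obtain ⟨e, he, -, -, hr⟩ := exists_isBridge_of_not_reachable_induce (hdeg w) hu hv h.1 hsep
    exact hr (h.2 e he)
  · rintro w ⟨u, v, hu, hv, huv, hsep⟩
    obtain ⟨e, he, hwe, hb, -⟩ := exists_isBridge_of_not_reachable_induce (hdeg w) hu hv huv
      (hsep hu hv)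
    exact ⟨e, he, hwe, hb⟩
end

section
/- Let G be a graph and let G' be obtained by adding a new vertex x adjacent to every vertex of G. Then two vertices u, v of G are connected in G if and only if u and v are biconnected in G'. -/
open SimpleGraph

/-- `G` together with a new apex vertex (`none`) adjacent to every vertex of `G`. -/
def apexGraph {V : Type*} (G : SimpleGraph V) : SimpleGraph (Option V) :=
  SimpleGraph.fromRel (fun a b =>
    match a, b with
    | some a, some b => G.Adj a b
    | some _, none => True
    | none, some _ => True
    | none, none => False)

/-- `u` and `v` are biconnected in `H`: connected, not separated by the removal of any
single vertex other than `u`, `v`, and not separated by the bridge `uv`. -/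
def Biconnected14 {W : Type*} (H : SimpleGraph W) (u v : W) : Prop :=
  H.Reachable u v ∧
    (∀ w, ∀ (hu : u ≠ w) (hv : v ≠ w),
      (H.induce {x | x ≠ w}).Reachable ⟨u, hu⟩ ⟨v, hv⟩) ∧
    ¬ H.IsBridge s(u, v)

/-!
Every vertex of `G` is adjacent to the apex, so any two of them stay connected after deleting a
vertex of `G` or the edge between them. Deleting the apex itself gives back `G`, so
biconnectivity in `G'` implies connectivity in `G`.
-/

namespace SimpleGraph

variable {W : Type*} {H : SimpleGraph W}

theorem induce_reachable_of_adj_of_adj {s : Set W} {a b c : W} (ha : a ∈ s) (hb : b ∈ s)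
    (hc : c ∈ s) (hac : H.Adj a c) (hcb : H.Adj c b) :
    (H.induce s).Reachable ⟨a, ha⟩ ⟨b, hb⟩ :=
  (show (H.induce s).Adj ⟨a, ha⟩ ⟨c, hc⟩ from hac).reachable.trans
    (show (H.induce s).Adj ⟨c, hc⟩ ⟨b, hb⟩ from hcb).reachable

theorem not_isBridge_of_adj_of_adj {a b c : W} (hac : H.Adj a c) (hcb : H.Adj c b) :
    ¬ H.IsBridge s(a, b) := by
  rw [isBridge_iff, not_not]
  have hac' : (H.deleteEdges {s(a, b)}).Adj a c :=
    ⟨hac, by simp [hcb.ne, hac.ne.symm]⟩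
  have hcb' : (H.deleteEdges {s(a, b)}).Adj c b :=
    ⟨hcb, by simp [hac.ne.symm, hcb.ne]⟩
  exact hac'.reachable.trans hcb'.reachable

end SimpleGraph

section apexGraph

variable {V : Type*} (G : SimpleGraph V)

theorem apexGraph_adj_some_some {a b : V} :
    (apexGraph G).Adj (some a) (some b) ↔ G.Adj a b := by
  simp only [apexGraph, fromRel_adj, ne_eq, Option.some.injEq]
  exact ⟨fun ⟨_, h⟩ => h.elim id G.adj_symm, fun h => ⟨h.ne, Or.inl h⟩⟩

theorem apexGraph_adj_none_some (a : V) : (apexGraph G).Adj none (some a) := by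
  simp [apexGraph]

def apexGraphInduceNeNoneIso : G ≃g (apexGraph G).induce {x | x ≠ none} where
  toFun a := ⟨some a, Option.some_ne_none a⟩
  invFun p := p.1.get (Option.ne_none_iff_isSome.mp p.2)
  left_inv _ := rfl
  right_inv
    | ⟨some _, _⟩ => rfl
  map_rel_iff' := apexGraph_adj_some_some G

theorem apexGraph_induce_ne_none_reachable_iff {u v : V} :
    ((apexGraph G).induce {x | x ≠ none}).Reachable
        ⟨some u, Option.some_ne_none u⟩ ⟨some v, Option.some_ne_none v⟩ ↔
      G.Reachable u v :=
  Iso.reachable_iff (φ := apexGraphInduceNeNoneIso G)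

end apexGraph

/-- Adding an apex vertex adjacent to all of `G`: two vertices `u`, `v` of `G` are
connected in `G` iff they are biconnected in the augmented graph `G'`. -/
theorem stmt14 {V : Type*} (G : SimpleGraph V) (u v : V) :
    G.Reachable u v ↔ Biconnected14 (apexGraph G) (some u) (some v) := by
  have hu := (apexGraph_adj_none_some G u).symm
  have hv := apexGraph_adj_none_some G v
  constructor
  · intro h
    refine ⟨hu.reachable.trans hv.reachable, fun w hw_u hw_v => ?_,
      not_isBridge_of_adj_of_adj hu hv⟩
    cases w with
    | none => exact (apexGraph_induce_ne_none_reachable_iff G).mpr h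
    | some w =>
      exact induce_reachable_of_adj_of_adj (c := none) hw_u hw_v
        (Option.some_ne_none w).symm hu hv
  · rintro ⟨-, hsep, -⟩
    exact (apexGraph_induce_ne_none_reachable_iff G).mp
      (hsep none (Option.some_ne_none u) (Option.some_ne_none v))
end

section
/- In a bicapacitated forest of BC-trees (non-bridge blocks have capacity 2, bridge blocks and vertices capacity 1), two vertices u and v of the underlying graph G are biconnected in G if and only if there exists a flow of value 2 from u to v in the BC-tree (ignoring the capacities of u and v themselves). Equivalently for a tree: the path from u to v in the BC-tree has all internal nodes of capacity 2 exactly when u and v are biconnected. -/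
open SimpleGraph

/-- A (candidate) block of `G`: a connected subgraph without a cutvertex. -/
def IsBlock {V : Type*} (G : SimpleGraph V) (B : G.Subgraph) : Prop :=
  B.coe.Connected ∧
    ∀ w : V, (B.deleteVerts {w}).verts.Nonempty → (B.deleteVerts {w}).coe.Connected

/-- The maximal blocks of `G`. -/
def MaxBlock {V : Type*} (G : SimpleGraph V) : Type _ :=
  {B : G.Subgraph // IsBlock G B ∧ ∀ B', IsBlock G B' → B ≤ B' → B' = B}

/-- The block-cutpoint tree of `G`: nodes are the vertices of `G` together with the
blocks of `G`, a vertex adjacent to a block iff it belongs to it. -/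
def BCTree {V : Type*} (G : SimpleGraph V) : SimpleGraph (V ⊕ MaxBlock G) :=
  SimpleGraph.fromRel (fun x y =>
    match x, y with
    | Sum.inl v, Sum.inr B => v ∈ (B.1 : G.Subgraph).verts
    | _, _ => False)

/-- Capacities in the bicapacitated BC-tree: vertex nodes and bridge-block nodes get
capacity 1, non-bridge block nodes (blocks on at least 3 vertices) get capacity 2. -/
noncomputable def cap {V : Type*} (G : SimpleGraph V) : V ⊕ MaxBlock G → ℕ :=
  Sum.elim (fun _ => 1)
    (fun B => by classical exact if 3 ≤ (B.1 : G.Subgraph).verts.ncard then 2 else 1)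

/-- `u` and `v` are biconnected in `G`. -/
def Biconnected15 {V : Type*} (G : SimpleGraph V) (u v : V) : Prop :=
  G.Reachable u v ∧
    (∀ w, ∀ (hu : u ≠ w) (hv : v ≠ w),
      (G.induce {x | x ≠ w}).Reachable ⟨u, hu⟩ ⟨v, hv⟩) ∧
    ¬ G.IsBridge s(u, v)

/-! Vertex nodes have capacity 1 and the BC-tree only joins vertices to blocks, so an admissible
path from `u` to `v` is `u – M – v` for a maximal block `M` on at least three vertices; what
remains is that `u`, `v` are biconnected iff they lie in a common block with a third vertex `t`.

A block gives walks `u → v` avoiding any `w`, and the walks `u → t` avoiding `v` and `t → v`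
avoiding `u` combine into one avoiding the edge `uv`. Conversely, induct on `dist u v` (Whitney):
if `u ~ v`, the edge together with a `u–v` path avoiding it is a cycle; otherwise let `w` be the
successor of `u` on a shortest path, take a block through `w` and `v` by induction, and add the
path `w, u, …, v` avoiding `w`. Adding a path between two distinct vertices of a block never
creates a cut vertex: after deleting `x`, every vertex of the path still reaches one of its ends
along the path. -/

namespace SimpleGraph

variable {V : Type*} {G : SimpleGraph V}

lemma Subgraph.le_deleteVerts {H K : G.Subgraph} {s : Set V} (hKH : K ≤ H)
    (hs : Disjoint K.verts s) : K ≤ H.deleteVerts s :=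
  ⟨fun _ hx => ⟨hKH.1 hx, hs.notMem_of_mem_left hx⟩, fun _ _ hxy => Subgraph.deleteVerts_adj.2
    ⟨hKH.1 hxy.fst_mem, hs.notMem_of_mem_left hxy.fst_mem, hKH.1 hxy.snd_mem,
      hs.notMem_of_mem_left hxy.snd_mem, hKH.2 hxy⟩⟩

lemma Subgraph.Connected.of_forall_exists_walk_to {H K : G.Subgraph} (hK : K.Connected)
    (hKH : K ≤ H) (h : ∀ y ∈ H.verts, ∃ z ∈ K.verts, ∃ p : G.Walk y z, p.toSubgraph ≤ H) :
    H.Connected := by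
  rw [Subgraph.connected_iff_forall_exists_walk_subgraph] at hK ⊢
  refine ⟨hK.1.mono hKH.1, fun {y y'} hy hy' => ?_⟩
  obtain ⟨z, hz, p, hp⟩ := h y hy
  obtain ⟨z', hz', p', hp'⟩ := h y' hy'
  obtain ⟨q, hq⟩ := hK.2 hz hz'
  refine ⟨p.append (q.append p'.reverse), ?_⟩
  simp only [Walk.toSubgraph_append, Walk.toSubgraph_reverse]
  exact sup_le hp (sup_le (hq.trans hKH) hp')

lemma Walk.IsPath.exists_walk_to_end_notMem_support {a b x y : V} {p : G.Walk a b}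
    (hp : p.IsPath) (hy : y ∈ p.support) (hxy : x ≠ y) :
    ∃ z, (z = a ∨ z = b) ∧ ∃ q : G.Walk y z, q.toSubgraph ≤ p.toSubgraph ∧ x ∉ q.support := by
  classical
  have hsplit : p.toSubgraph = (p.takeUntil y hy).toSubgraph ⊔ (p.dropUntil y hy).toSubgraph := by
    rw [← Walk.toSubgraph_append, Walk.take_spec]
  by_cases hx : x ∈ (p.takeUntil y hy).support
  · refine ⟨b, .inr rfl, p.dropUntil y hy, hsplit ▸ le_sup_right, fun hx' => ?_⟩
    have hnodup := hp.support_nodup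
    rw [← p.take_spec hy, Walk.support_append] at hnodup
    rw [← Walk.cons_tail_support] at hx'
    exact List.disjoint_of_nodup_append hnodup hx ((List.mem_cons.1 hx').resolve_left hxy)
  · refine ⟨a, .inl rfl, (p.takeUntil y hy).reverse, ?_, by rwa [Walk.support_reverse,
      List.mem_reverse]⟩
    rw [Walk.toSubgraph_reverse, hsplit]
    exact le_sup_left

lemma isBlock_subgraphOfAdj {u v : V} (h : G.Adj u v) : IsBlock G (G.subgraphOfAdj h) := by
  refine ⟨(Subgraph.subgraphOfAdj_connected h).coe, fun x hx => ?_⟩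
  by_cases hxuv : x = u ∨ x = v
  · have : Subsingleton ((G.subgraphOfAdj h).deleteVerts {x}).verts := by
      constructor
      rintro ⟨a, ha⟩ ⟨b, hb⟩
      simp only [Subgraph.deleteVerts_verts, subgraphOfAdj_verts, Set.mem_sdiff, Set.mem_insert_iff,
        Set.mem_singleton_iff] at ha hb
      ext; grind
    exact (Subgraph.connected_iff.2 ⟨⟨Preconnected.of_subsingleton⟩, hx⟩).coe
  · rw [← Subgraph.deleteVerts_inter_verts_left_eq, subgraphOfAdj_verts,
      Set.inter_singleton_eq_empty.2 (by simpa using hxuv), Subgraph.deleteVerts_empty]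
    exact (Subgraph.subgraphOfAdj_connected h).coe

lemma IsBlock.sup_toSubgraph_of_isPath {B : G.Subgraph} (hB : IsBlock G B) {a b : V}
    {p : G.Walk a b} (hp : p.IsPath) (hab : a ≠ b) (ha : a ∈ B.verts) (hb : b ∈ B.verts) :
    IsBlock G (B ⊔ p.toSubgraph) := by
  refine ⟨(Subgraph.connected_sup (Subgraph.connected_iff'.2 hB.1).preconnected
    p.toSubgraph_connected.preconnected ⟨a, ha, p.start_mem_verts_toSubgraph⟩).coe, fun x _ => ?_⟩
  obtain ⟨c, hcB, hcx⟩ : ∃ c ∈ B.verts, c ≠ x := by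
    by_cases hax : a = x
    exacts [⟨b, hb, hax ▸ hab.symm⟩, ⟨a, ha, hax⟩]
  have hBx : (B.deleteVerts {x}).Connected := ⟨hB.2 x ⟨c, hcB, hcx⟩⟩
  refine (hBx.of_forall_exists_walk_to (Subgraph.deleteVerts_mono le_sup_left) ?_).coe
  rintro y ⟨hy | hy, hyx⟩
  · exact ⟨y, ⟨hy, hyx⟩, .nil, by simpa using ⟨Or.inl hy, hyx⟩⟩
  · rw [Walk.mem_verts_toSubgraph] at hy
    obtain ⟨z, hz, q, hqp, hxq⟩ := hp.exists_walk_to_end_notMem_support hy (Ne.symm hyx)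
    have hzx : z ≠ x := fun h => hxq (h ▸ q.end_mem_support)
    refine ⟨z, ⟨hz.elim (· ▸ ha) (· ▸ hb), hzx⟩, q,
      Subgraph.le_deleteVerts (hqp.trans le_sup_right) ?_⟩
    simpa [Walk.verts_toSubgraph] using hxq

lemma IsBlock.exists_walk_notMem_support {B : G.Subgraph} (hB : IsBlock G B) {x y z : V}
    (hy : y ∈ B.verts) (hz : z ∈ B.verts) (hyx : y ≠ x) (hzx : z ≠ x) :
    ∃ p : G.Walk y z, x ∉ p.support := by
  obtain ⟨p, hp⟩ := ((Subgraph.connected_iff_forall_exists_walk_subgraph _).1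
    ⟨hB.2 x ⟨y, hy, hyx⟩⟩).2 (⟨hy, hyx⟩ : y ∈ (B.deleteVerts {x}).verts) ⟨hz, hzx⟩
  exact ⟨p, fun hx => (hp.1 (p.mem_verts_toSubgraph.2 hx)).2 rfl⟩

lemma biconnected15_iff {u v : V} :
    Biconnected15 G u v ↔ (∀ w, u ≠ w → v ≠ w → ∃ p : G.Walk u v, w ∉ p.support) ∧
      ∃ p : G.Walk u v, s(u, v) ∉ p.edges := by
  have hinduce : ∀ w (hu : u ≠ w) (hv : v ≠ w),
      (G.induce {x | x ≠ w}).Reachable ⟨u, hu⟩ ⟨v, hv⟩ ↔ ∃ p : G.Walk u v, w ∉ p.support := by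
    refine fun w hu hv => ⟨fun ⟨q⟩ => ⟨q.map (Embedding.induce _).toHom, ?_⟩,
      fun ⟨p, hp⟩ => ⟨p.induce _ fun x hx (h : x = w) => hp (h ▸ hx)⟩⟩
    intro hw
    replace hw : w ∈ (q.map (Embedding.induce _).toHom).support := hw
    rw [Walk.support_map, List.mem_map] at hw
    obtain ⟨a, -, ha⟩ := hw
    exact a.2 ha
  simp only [Biconnected15, hinduce, isBridge_iff_forall_walk_mem_edges, not_forall]
  exact ⟨fun ⟨_, h⟩ => h, fun ⟨h, p, hp⟩ => ⟨p.reachable, h, p, hp⟩⟩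

lemma IsBlock.biconnected15 {B : G.Subgraph} (hB : IsBlock G B) {u v t : V} (hu : u ∈ B.verts)
    (hv : v ∈ B.verts) (ht : t ∈ B.verts) (huv : u ≠ v) (htu : t ≠ u) (htv : t ≠ v) :
    Biconnected15 G u v := by
  refine biconnected15_iff.2 ⟨fun w huw hvw => hB.exists_walk_notMem_support hu hv huw hvw, ?_⟩
  obtain ⟨p, hp⟩ := hB.exists_walk_notMem_support hu ht huv htv
  obtain ⟨q, hq⟩ := hB.exists_walk_notMem_support ht hv htu huv.symm
  refine ⟨p.append q, fun h => ?_⟩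
  rw [Walk.edges_append, List.mem_append] at h
  exact h.elim (fun h => hp (p.snd_mem_support_of_mem_edges h))
    (fun h => hq (q.fst_mem_support_of_mem_edges h))

lemma exists_isBlock_of_adj {u v : V} (h : G.Adj u v) {q : G.Walk u v} (hq : s(u, v) ∉ q.edges) :
    ∃ B : G.Subgraph, IsBlock G B ∧ u ∈ B.verts ∧ v ∈ B.verts ∧ ∃ t ∈ B.verts, t ≠ u ∧ t ≠ v := by
  classical
  set Q := q.bypass
  have hQ : s(u, v) ∉ Q.edges := fun h' => hq (q.edges_bypass_subset_edges h')
  have hnil : ¬ Q.Nil := Walk.not_nil_of_ne h.ne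
  refine ⟨G.subgraphOfAdj h ⊔ Q.toSubgraph, (isBlock_subgraphOfAdj h).sup_toSubgraph_of_isPath
    q.bypass_isPath h.ne (by simp) (by simp), by simp, by simp, Q.snd, ?_, (Q.adj_snd hnil).ne',
    fun h' => hQ (by have := Q.mk_start_snd_mem_edges hnil; rwa [h'] at this)⟩
  exact Or.inr (Q.mem_verts_toSubgraph.2 (Q.getVert_mem_support 1))

lemma exists_isBlock_of_forall_exists_walk {u v : V} (huv : u ≠ v)
    (hvert : ∀ w, u ≠ w → v ≠ w → ∃ p : G.Walk u v, w ∉ p.support)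
    (hedge : ∃ p : G.Walk u v, s(u, v) ∉ p.edges) :
    ∃ B : G.Subgraph, IsBlock G B ∧ u ∈ B.verts ∧ v ∈ B.verts ∧ ∃ t ∈ B.verts, t ≠ u ∧ t ≠ v := by
  classical
  induction hn : G.dist u v using Nat.strong_induction_on generalizing u with | _ n ih
  obtain ⟨r, hr⟩ := hedge
  by_cases hadj : G.Adj u v
  · exact exists_isBlock_of_adj hadj hr
  obtain ⟨p, hp, hpn⟩ := r.reachable.exists_path_of_dist
  have hnil : ¬ p.Nil := Walk.not_nil_of_ne huv
  set w := p.snd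
  have huw : G.Adj u w := p.adj_snd hnil
  have hwv : w ≠ v := fun h => hadj (h ▸ huw)
  have hu_tail : u ∉ p.tail.support := by
    rw [← p.cons_tail_eq hnil, Walk.cons_isPath_iff] at hp
    exact hp.2
  obtain ⟨q, hq⟩ := hvert w huw.ne hwv.symm
  have hdist : G.dist w v < n := by
    have : G.dist w v ≤ p.tail.length := G.dist_le p.tail
    have := p.length_tail_add_one hnil
    omega
  have hvert' : ∀ x, w ≠ x → v ≠ x → ∃ q' : G.Walk w v, x ∉ q'.support := by
    intro x hwx hvx
    by_cases hux : u = x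
    · exact ⟨p.tail, hux ▸ hu_tail⟩
    · obtain ⟨q', hq'⟩ := hvert x hux hvx
      exact ⟨.cons huw.symm q', by simp [hq', hwx.symm]⟩
  have hedge' : s(w, v) ∉ (Walk.cons huw.symm q).edges := by
    simp only [Walk.edges_cons, List.mem_cons, Sym2.eq, Sym2.rel_iff', not_or]
    exact ⟨by grind, fun h => hq (q.fst_mem_support_of_mem_edges h)⟩
  obtain ⟨B, hB, hwB, hvB, -⟩ := ih _ hdist hwv hvert' ⟨_, hedge'⟩ rfl
  have hear : (Walk.cons huw.symm q.bypass).IsPath :=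
    q.bypass_isPath.cons fun h => hq (q.support_bypass_subset_support h)
  exact ⟨B ⊔ (Walk.cons huw.symm q.bypass).toSubgraph,
    hB.sup_toSubgraph_of_isPath hear hwv hwB hvB, Or.inr (by simp), Or.inl hvB,
    w, Or.inl hwB, huw.ne', hwv⟩

lemma exists_maxBlock_le [Finite V] {B : G.Subgraph} (hB : IsBlock G B) :
    ∃ M : MaxBlock G, B ≤ M.1 := by
  obtain ⟨M, hBM, hM⟩ := Finite.exists_le_maximal hB
  exact ⟨(⟨M, hM.1, fun B' hB' hMB' => le_antisymm (hM.2 hB' hMB') hMB'⟩ :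
    {B : G.Subgraph // IsBlock G B ∧ ∀ B', IsBlock G B' → B ≤ B' → B' = B}), hBM⟩

lemma biconnected15_iff_exists_maxBlock [Finite V] {u v : V} (huv : u ≠ v) :
    Biconnected15 G u v ↔
      ∃ M : MaxBlock G, u ∈ M.1.verts ∧ v ∈ M.1.verts ∧ 3 ≤ M.1.verts.ncard := by
  constructor
  · intro h
    obtain ⟨hvert, hedge⟩ := biconnected15_iff.1 h
    obtain ⟨B, hB, hu, hv, t, ht, htu, htv⟩ := exists_isBlock_of_forall_exists_walk huv hvert hedge
    obtain ⟨M, hBM⟩ := exists_maxBlock_le hB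
    exact ⟨M, hBM.1 hu, hBM.1 hv, (Set.two_lt_ncard (Set.toFinite _)).2
      ⟨u, hBM.1 hu, v, hBM.1 hv, t, hBM.1 ht, huv, htu.symm, htv.symm⟩⟩
  · rintro ⟨M, hu, hv, h3⟩
    obtain ⟨t, ht, htuv⟩ := Set.exists_mem_notMem_of_ncard_lt_ncard
      ((Set.ncard_pair huv).trans_lt h3 : ({u, v} : Set V).ncard < M.1.verts.ncard)
    simp only [Set.mem_insert_iff, Set.mem_singleton_iff, not_or] at htuv
    exact M.2.1.biconnected15 hu hv ht huv htuv.1 htuv.2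

lemma bcTree_adj_inl {a : V} {y : V ⊕ MaxBlock G} :
    (BCTree G).Adj (.inl a) y ↔ ∃ M : MaxBlock G, y = .inr M ∧ a ∈ M.1.verts := by
  cases y <;> simp [BCTree]

lemma bcTree_adj_inr {M : MaxBlock G} {y : V ⊕ MaxBlock G} :
    (BCTree G).Adj (.inr M) y ↔ ∃ a : V, y = .inl a ∧ a ∈ M.1.verts := by
  cases y <;> simp [BCTree]

lemma cap_inr_eq_two_iff (M : MaxBlock G) : cap G (.inr M) = 2 ↔ 3 ≤ M.1.verts.ncard := by
  simp only [cap, Sum.elim_inr]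
  split_ifs <;> simp_all

lemma exists_bcTree_path_iff {u v : V} (huv : u ≠ v) :
    (∃ p : (BCTree G).Walk (.inl u) (.inl v), p.IsPath ∧
        ∀ x ∈ p.support, x ≠ .inl u → x ≠ .inl v → cap G x = 2) ↔
      ∃ M : MaxBlock G, u ∈ M.1.verts ∧ v ∈ M.1.verts ∧ 3 ≤ M.1.verts.ncard := by
  constructor
  · rintro ⟨p, hp, hcap⟩
    cases p with
    | nil => exact absurd rfl huv
    | cons h1 p1 =>
      obtain ⟨M, rfl, huM⟩ := bcTree_adj_inl.1 h1
      cases p1 with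
      | cons h2 p2 =>
        obtain ⟨b, rfl, hbM⟩ := bcTree_adj_inr.1 h2
        cases p2 with
        | nil =>
          exact ⟨M, huM, hbM, (cap_inr_eq_two_iff M).1 (hcap _ (by simp) (by simp) (by simp))⟩
        | cons h3 p3 =>
          simp only [Walk.cons_isPath_iff, Walk.support_cons, List.mem_cons, not_or] at hp
          obtain ⟨⟨⟨-, hb⟩, -⟩, -, hub, -⟩ := hp
          have := hcap (.inl b) (by simp) (Ne.symm hub)
            fun h => hb (by rw [h]; exact p3.end_mem_support)
          simp [cap] at this
  · rintro ⟨M, huM, hvM, h3⟩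
    refine ⟨.cons (bcTree_adj_inl.2 ⟨M, rfl, huM⟩) (.cons (bcTree_adj_inr.2 ⟨v, rfl, hvM⟩) .nil),
      by simp [Walk.cons_isPath_iff, huv], ?_⟩
    simp only [Walk.support_cons, Walk.support_nil, List.mem_cons, List.not_mem_nil, or_false]
    rintro x (rfl | rfl | rfl) hxu hxv
    exacts [absurd rfl hxu, (cap_inr_eq_two_iff M).2 h3, absurd rfl hxv]

end SimpleGraph

theorem stmt15_general {V : Type*} [Fintype V] (G : SimpleGraph V)
    (u v : V) (huv : u ≠ v) :
    Biconnected15 G u v ↔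
      ∃ p : (BCTree G).Walk (Sum.inl u) (Sum.inl v), p.IsPath ∧
        ∀ x ∈ p.support, x ≠ Sum.inl u → x ≠ Sum.inl v → cap G x = 2 :=
  (biconnected15_iff_exists_maxBlock huv).trans (exists_bcTree_path_iff huv).symm

/-- In the bicapacitated BC-tree of a connected graph `G`, two distinct vertices `u`,
`v` are biconnected in `G` iff there is a flow of value 2 from `u` to `v` in the
BC-tree (ignoring the capacities of `u`, `v`), equivalently iff the BC-tree path from
`u` to `v` has all internal nodes of capacity 2. -/
theorem stmt15 {V : Type*} [Fintype V] (G : SimpleGraph V) (hG : G.Connected)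
    (u v : V) (huv : u ≠ v) :
    Biconnected15 G u v ↔
      ∃ p : (BCTree G).Walk (Sum.inl u) (Sum.inl v), p.IsPath ∧
        ∀ x ∈ p.support, x ≠ Sum.inl u → x ≠ Sum.inl v → cap G x = 2 :=
  stmt15_general G u v huv
end

section
/- Replacing, in a graph, each vertex v of capacity 2 by two copies v1, v2 and joining every copy of v to every copy of each neighbor of v preserves capacitated biconnectivity: two capacity-1 vertices u, w are joined by a flow of value 2 respecting vertex capacities in the original graph if and only if u and w are biconnected (have two internally vertex-disjoint paths) in the transformed graph. -/
open SimpleGraph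

/-- The transformed graph: each capacity-2 vertex of `G` is replaced by two copies,
capacity-1 vertices keep a single copy, and every copy of a vertex is joined to every
copy of each of its neighbors. -/
def DoubledGraph {V : Type*} (G : SimpleGraph V) (cap : V → ℕ) :
    SimpleGraph {p : V × Fin 2 // p.2 = 0 ∨ cap p.1 = 2} where
  Adj x y := G.Adj x.1.1 y.1.1
  symm := ⟨fun x y h => G.adj_symm h⟩
  loopless := ⟨fun x h => G.irrefl h⟩


/-!
A flow of value 2 is a pair of paths `p, q` such that every internal vertex shared by them
has capacity 2. Routing `p` through the copies `(v, 0)` and `q` through the copies `(v, 1)`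
of capacity-2 vertices makes the lifted paths internally disjoint. Conversely, projecting two
internally disjoint paths of the doubled graph back to `G` and shortening the images to paths
gives a flow: a capacity-1 vertex has a single copy, so it cannot lie on both projections.
-/

theorem SimpleGraph.Walk.IsPath.count_support_le_one {V : Type*} [DecidableEq V]
    {G : SimpleGraph V} {u v : V} {p : G.Walk u v} (hp : p.IsPath) (x : V) :
    p.support.count x ≤ 1 :=
  List.nodup_iff_count_le_one.mp hp.support_nodup x

namespace DoubledGraph

variable {V : Type*} {G : SimpleGraph V} {cap : V → ℕ}

variable (G cap) in
def firstCopy : G ↪g DoubledGraph G cap where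
  toFun v := ⟨(v, 0), Or.inl rfl⟩
  inj' _ _ h := (Prod.ext_iff.mp (Subtype.ext_iff.mp h)).1
  map_rel_iff' := Iff.rfl

variable (G cap) in
def secondCopy : G ↪g DoubledGraph G cap where
  toFun v := ⟨(v, if cap v = 2 then 1 else 0), by by_cases h : cap v = 2 <;> simp [h]⟩
  inj' _ _ h := (Prod.ext_iff.mp (Subtype.ext_iff.mp h)).1
  map_rel_iff' := Iff.rfl

theorem secondCopy_eq_firstCopy {v : V} (hv : cap v ≠ 2) :
    secondCopy G cap v = firstCopy G cap v :=
  Subtype.ext (Prod.ext rfl (if_neg hv))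

theorem firstCopy_eq_secondCopy_iff {a b : V} :
    firstCopy G cap a = secondCopy G cap b ↔ a = b ∧ cap a ≠ 2 := by
  rw [Subtype.ext_iff, Prod.ext_iff]
  change a = b ∧ (0 : Fin 2) = (if cap b = 2 then 1 else 0) ↔ _
  by_cases hb : cap b = 2 <;> simp only [hb, if_true, if_false] <;> grind

variable (G cap) in
def proj : DoubledGraph G cap →g G where
  toFun x := x.1.1
  map_rel' h := h

theorem eq_firstCopy_of_cap_ne_two (x : {p : V × Fin 2 // p.2 = 0 ∨ cap p.1 = 2})
    (hx : cap x.1.1 ≠ 2) : x = firstCopy G cap x.1.1 :=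
  Subtype.ext (Prod.ext rfl (x.2.resolve_right hx))

theorem firstCopy_mem_support_of_mem_support_map_proj
    {a b : {p : V × Fin 2 // p.2 = 0 ∨ cap p.1 = 2}} {P : (DoubledGraph G cap).Walk a b}
    {v : V} (hv : v ∈ (P.map (proj G cap)).support) (hcap : cap v ≠ 2) :
    firstCopy G cap v ∈ P.support := by
  rw [Walk.support_map] at hv
  obtain ⟨x, hxP, rfl⟩ := List.mem_map.mp hv
  change firstCopy G cap x.1.1 ∈ _
  rwa [← eq_firstCopy_of_cap_ne_two x hcap]

variable [DecidableEq V]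

theorem cap_eq_two_of_mem_support_of_mem_support (hcap : ∀ v, cap v ≤ 2) {a b : V}
    {p q : G.Walk a b}
    (hflow : ∀ v, v ≠ a → v ≠ b → p.support.count v + q.support.count v ≤ cap v)
    {v : V} (hp : v ∈ p.support) (hq : v ∈ q.support) (ha : v ≠ a) (hb : v ≠ b) :
    cap v = 2 := by
  have := List.count_pos_iff.mpr hp
  have := List.count_pos_iff.mpr hq
  have := hflow v ha hb
  have := hcap v
  omega

theorem eq_endpoint_of_mem_support_map_copies (hcap : ∀ v, cap v ≤ 2)
    {a b : V} {p q : G.Walk a b}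
    (hflow : ∀ v, v ≠ a → v ≠ b → p.support.count v + q.support.count v ≤ cap v)
    {x : {p : V × Fin 2 // p.2 = 0 ∨ cap p.1 = 2}}
    (hxp : x ∈ (p.map (firstCopy G cap).toHom).support)
    (hxq : x ∈ (q.map (secondCopy G cap).toHom).support) :
    x = firstCopy G cap a ∨ x = firstCopy G cap b := by
  rw [Walk.support_map] at hxp hxq
  obtain ⟨v, hvp, rfl⟩ := List.mem_map.mp hxp
  obtain ⟨v', hvq, hvv'⟩ := List.mem_map.mp hxq
  obtain ⟨rfl, hv⟩ := (firstCopy_eq_secondCopy_iff (G := G)).mp hvv'.symm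
  by_contra! h
  exact hv (cap_eq_two_of_mem_support_of_mem_support hcap hflow hvp hvq
    (fun hva => h.1 (congrArg _ hva)) (fun hvb => h.2 (congrArg _ hvb)))

theorem exists_isPath_disjoint_of_flow (hcap : ∀ v, cap v ≤ 2) {u w : V} (hu : cap u ≠ 2)
    (hw : cap w ≠ 2) {p q : G.Walk u w} (hp : p.IsPath) (hq : q.IsPath)
    (hflow : ∀ v, v ≠ u → v ≠ w → p.support.count v + q.support.count v ≤ cap v) :
    ∃ P Q : (DoubledGraph G cap).Walk (firstCopy G cap u) (firstCopy G cap w),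
      P.IsPath ∧ Q.IsPath ∧
        ∀ x, x ∈ P.support → x ∈ Q.support → x = firstCopy G cap u ∨ x = firstCopy G cap w :=
  ⟨p.map (firstCopy G cap).toHom,
    (q.map (secondCopy G cap).toHom).copy (secondCopy_eq_firstCopy hu)
      (secondCopy_eq_firstCopy hw),
    hp.map (firstCopy G cap).injective, by simpa using hq.map (secondCopy G cap).injective,
    fun _ hxp hxq => eq_endpoint_of_mem_support_map_copies hcap hflow hxp (by simpa using hxq)⟩

theorem count_support_bypass_map_proj_add_le {a b : {p : V × Fin 2 // p.2 = 0 ∨ cap p.1 = 2}}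
    {P Q : (DoubledGraph G cap).Walk a b}
    (hdisj : ∀ x, x ∈ P.support → x ∈ Q.support → x = a ∨ x = b) {v : V} (hcap : 0 < cap v)
    (ha : v ≠ proj G cap a) (hb : v ≠ proj G cap b) :
    (P.map (proj G cap)).bypass.support.count v + (Q.map (proj G cap)).bypass.support.count v
      ≤ cap v := by
  have hP_count := (Walk.bypass_isPath (P.map (proj G cap))).count_support_le_one v
  have hQ_count := (Walk.bypass_isPath (Q.map (proj G cap))).count_support_le_one v
  by_cases hv2 : cap v = 2
  · omega
  suffices v ∉ (P.map (proj G cap)).bypass.support ∨ v ∉ (Q.map (proj G cap)).bypass.support by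
    rcases this with h | h <;> rw [List.count_eq_zero.mpr h] <;> omega
  by_contra! ⟨hvP, hvQ⟩
  rcases hdisj _
    (firstCopy_mem_support_of_mem_support_map_proj (Walk.support_bypass_subset_support _ hvP) hv2)
    (firstCopy_mem_support_of_mem_support_map_proj (Walk.support_bypass_subset_support _ hvQ) hv2)
    with h | h
  · exact ha (congrArg (proj G cap) h)
  · exact hb (congrArg (proj G cap) h)

end DoubledGraph

theorem stmt16_general {V : Type*} [DecidableEq V] (G : SimpleGraph V) (cap : V → ℕ)
    (hcap : ∀ v, cap v = 1 ∨ cap v = 2)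
    (u w : V) (hu : cap u = 1) (hw : cap w = 1) :
    (∃ p q : G.Walk u w, p.IsPath ∧ q.IsPath ∧
        ∀ v : V, v ≠ u → v ≠ w →
          p.support.count v + q.support.count v ≤ cap v) ↔
      (∃ P Q : (DoubledGraph G cap).Walk
          ⟨(u, 0), Or.inl rfl⟩ ⟨(w, 0), Or.inl rfl⟩,
        P.IsPath ∧ Q.IsPath ∧
          ∀ x, x ∈ P.support → x ∈ Q.support →
            x = ⟨(u, 0), Or.inl rfl⟩ ∨ x = ⟨(w, 0), Or.inl rfl⟩) := by
  constructor
  · rintro ⟨p, q, hp, hq, hflow⟩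
    exact DoubledGraph.exists_isPath_disjoint_of_flow (fun v => by grind) (by omega) (by omega)
      hp hq hflow
  · rintro ⟨P, Q, -, -, hdisj⟩
    exact ⟨_, _, Walk.bypass_isPath _, Walk.bypass_isPath _, fun v hvu hvw =>
      DoubledGraph.count_support_bypass_map_proj_add_le hdisj (by grind) hvu hvw⟩

/-- Doubling capacity-2 vertices preserves capacitated biconnectivity: capacity-1
vertices `u ≠ w` are joined by a flow of value 2 respecting vertex capacities in the
bicapacitated graph `G` (two paths using each internal vertex at most its capacity many
times in total) iff the corresponding vertices are biconnected (joined by two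
internally vertex-disjoint paths) in the transformed graph. -/
theorem stmt16 {V : Type*} [DecidableEq V] (G : SimpleGraph V) (cap : V → ℕ)
    (hcap : ∀ v, cap v = 1 ∨ cap v = 2)
    (u w : V) (huw : u ≠ w) (hu : cap u = 1) (hw : cap w = 1) :
    (∃ p q : G.Walk u w, p.IsPath ∧ q.IsPath ∧
        ∀ v : V, v ≠ u → v ≠ w →
          p.support.count v + q.support.count v ≤ cap v) ↔
      (∃ P Q : (DoubledGraph G cap).Walk
          ⟨(u, 0), Or.inl rfl⟩ ⟨(w, 0), Or.inl rfl⟩,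
        P.IsPath ∧ Q.IsPath ∧
          ∀ x, x ∈ P.support → x ∈ Q.support →
            x = ⟨(u, 0), Or.inl rfl⟩ ∨ x = ⟨(w, 0), Or.inl rfl⟩) :=
  stmt16_general G cap hcap u w hu hw
end

section
/- Define the potential Φ(u) of a node u in a rooted weighted tree as |L_b(u)| + 2⌊Σ_{(c,p)∈H(u)} log₂(s(p)/s(c))⌋ + Σ_{(c,p)∈L_w(u)} (6⌊log₂(s(p)/s(c))⌋ − 1), where H(u), L_b(u), L_w(u) are the heavy edges, light edges with black parent, and light edges with white parent on the root path of u. Then 0 ≤ Φ(u) ≤ max(0, 6⌊log₂(B/s(u))⌋ − 1), where B = s(root). -/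
/-!
Writing `g i = log₂ (s pᵢ₊₁ / s pᵢ)` for the edges of the root path, the sum of all
`g i` telescopes to `log₂ (B / s u)`, and every light edge has `g i ≥ 1`. Superadditivity
of the floor gives `⌊Σ_H g⌋ + Σ_{L_b} ⌊g⌋ + Σ_{L_w} ⌊g⌋ ≤ ⌊log₂ (B / s u)⌋ =: T`, while
`|L_b| ≤ Σ_{L_b} ⌊g⌋`, so `Φ(u) ≤ 6T - |L_w| ≤ 6T - 1` as soon as `L_w ≠ ∅`; if
`L_w = ∅` then `Φ(u) = |L_b| + 2⌊Σ_H g⌋`, which is `0` or at most `6T - 1`.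
-/

open Finset Real

section Potential

variable {ι : Type*}

/-- `Φ(u)` for the edge weights `g (c, p) = log₂ (s p / s c)`, with `H`, `Lb`, `Lw` the heavy
edges and the light edges with black and with white parent of the root path. -/
noncomputable def potential (g : ι → ℝ) (H Lb Lw : Finset ι) : ℤ :=
  #Lb + 2 * ⌊∑ i ∈ H, g i⌋ + ∑ i ∈ Lw, (6 * ⌊g i⌋ - 1)

lemma card_le_sum_floor {g : ι → ℝ} {s : Finset ι} (hs : ∀ i ∈ s, 1 ≤ g i) :
    (#s : ℤ) ≤ ∑ i ∈ s, ⌊g i⌋ := by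
  simpa using card_nsmul_le_sum s (fun i => ⌊g i⌋) 1 fun i hi => Int.floor_pos.mpr (hs i hi)

lemma potential_nonneg {g : ι → ℝ} {H Lb Lw : Finset ι} (hH : 0 ≤ ∑ i ∈ H, g i)
    (hLw : ∀ i ∈ Lw, 1 ≤ g i) : 0 ≤ potential g H Lb Lw := by
  have hfloor : 0 ≤ ⌊∑ i ∈ H, g i⌋ := Int.floor_nonneg.mpr hH
  have hterms : 0 ≤ ∑ i ∈ Lw, (6 * ⌊g i⌋ - 1) :=
    sum_nonneg fun i hi => by linarith [Int.floor_pos.mpr (hLw i hi)]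
  unfold potential
  positivity

lemma potential_le {g : ι → ℝ} {H Lb Lw : Finset ι} (hH : 0 ≤ ∑ i ∈ H, g i)
    (hLb : ∀ i ∈ Lb, 1 ≤ g i) (hLw : ∀ i ∈ Lw, 1 ≤ g i) :
    potential g H Lb Lw ≤
      max 0 (6 * ⌊∑ i ∈ H, g i + ∑ i ∈ Lb, g i + ∑ i ∈ Lw, g i⌋ - 1) := by
  have hfloor : 0 ≤ ⌊∑ i ∈ H, g i⌋ := Int.floor_nonneg.mpr hH
  have hb := card_le_sum_floor hLb
  have hw := card_le_sum_floor hLw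
  have hsuper : ⌊∑ i ∈ H, g i⌋ + ∑ i ∈ Lb, ⌊g i⌋ + ∑ i ∈ Lw, ⌊g i⌋ ≤
      ⌊∑ i ∈ H, g i + ∑ i ∈ Lb, g i + ∑ i ∈ Lw, g i⌋ := by
    rw [Int.le_floor]
    push_cast
    gcongr with i _ i _ <;> exact Int.floor_le _
  have hwhite : ∑ i ∈ Lw, (6 * ⌊g i⌋ - 1) = 6 * ∑ i ∈ Lw, ⌊g i⌋ - #Lw := by
    rw [sum_sub_distrib, ← mul_sum, sum_const, nsmul_one]
  unfold potential
  rw [hwhite]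
  rcases Lw.eq_empty_or_nonempty with rfl | hne
  · simp only [sum_empty, card_empty, add_zero, Nat.cast_zero, mul_zero, sub_zero] at hsuper ⊢
    omega
  · have := hne.card_pos
    omega

end Potential

lemma sum_range_logb_div (c : ℝ) (f : ℕ → ℝ) (hf : ∀ i, f i ≠ 0) (d : ℕ) :
    ∑ i ∈ range d, logb c (f (i + 1) / f i) = logb c (f d / f 0) := by
  simp only [logb_div (hf _) (hf _)]
  exact sum_range_sub (fun i => logb c (f i)) d

lemma logb_div_nonneg_of_le {c a b : ℝ} (hc : 1 < c) (ha : 0 < a) (h : a ≤ b) :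
    0 ≤ logb c (b / a) :=
  logb_nonneg hc ((one_le_div ha).mpr h)

lemma one_le_logb_div_of_mul_le {c a b : ℝ} (hc : 1 < c) (ha : 0 < a) (h : c * a ≤ b) :
    1 ≤ logb c (b / a) := by
  have hb : 0 < b := (mul_pos (by linarith) ha).trans_le h
  rwa [le_logb_iff_rpow_le hc (div_pos hb ha), rpow_one, le_div_iff₀ ha]

lemma sum_eq_sum_filter_not_add_sum_filter_and_add_sum_filter_and_not {M : Type*}
    [AddCommMonoid M] {ι : Type*} (s : Finset ι) (p q : ι → Prop) [DecidablePred p]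
    [DecidablePred q] (f : ι → M) :
    ∑ i ∈ s, f i = ∑ i ∈ s.filter (fun i => ¬ p i), f i
      + ∑ i ∈ s.filter (fun i => p i ∧ q i), f i
      + ∑ i ∈ s.filter (fun i => p i ∧ ¬ q i), f i := by
  rw [add_assoc, ← filter_filter, ← filter_filter, sum_filter_add_sum_filter_not,
    add_comm, sum_filter_add_sum_filter_not]

theorem stmt19_general {V : Type*} (parent : V → V) (root : V)
    (color : V → Bool) (s : V → ℕ) (B : ℕ)
    (hpos : ∀ v, 1 ≤ s v) (hmono : ∀ v, s v ≤ s (parent v)) (hB : s root = B)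
    (u : V) (d : ℕ) (hd : parent^[d] u = root) :
    0 ≤
      (((Finset.range d).filter (fun i =>
            2 * s (parent^[i] u) ≤ s (parent^[i + 1] u) ∧
              color (parent^[i + 1] u) = true)).card : ℤ)
        + 2 * ⌊∑ i ∈ (Finset.range d).filter (fun i =>
              s (parent^[i + 1] u) < 2 * s (parent^[i] u)),
            Real.logb 2 ((s (parent^[i + 1] u) : ℝ) / (s (parent^[i] u) : ℝ))⌋
        + ∑ i ∈ (Finset.range d).filter (fun i =>
              2 * s (parent^[i] u) ≤ s (parent^[i + 1] u) ∧
                color (parent^[i + 1] u) = false),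
            (6 * ⌊Real.logb 2 ((s (parent^[i + 1] u) : ℝ) / (s (parent^[i] u) : ℝ))⌋ - 1) ∧
    (((Finset.range d).filter (fun i =>
            2 * s (parent^[i] u) ≤ s (parent^[i + 1] u) ∧
              color (parent^[i + 1] u) = true)).card : ℤ)
        + 2 * ⌊∑ i ∈ (Finset.range d).filter (fun i =>
              s (parent^[i + 1] u) < 2 * s (parent^[i] u)),
            Real.logb 2 ((s (parent^[i + 1] u) : ℝ) / (s (parent^[i] u) : ℝ))⌋
        + ∑ i ∈ (Finset.range d).filter (fun i =>
              2 * s (parent^[i] u) ≤ s (parent^[i + 1] u) ∧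
                color (parent^[i + 1] u) = false),
            (6 * ⌊Real.logb 2 ((s (parent^[i + 1] u) : ℝ) / (s (parent^[i] u) : ℝ))⌋ - 1)
      ≤ max 0 (6 * ⌊Real.logb 2 ((B : ℝ) / (s u : ℝ))⌋ - 1) := by
  set g : ℕ → ℝ := fun i => logb 2 ((s (parent^[i + 1] u) : ℝ) / (s (parent^[i] u) : ℝ))
  have hspos : ∀ i, (0 : ℝ) < s (parent^[i] u) := fun i => mod_cast hpos _
  have hstep : ∀ i, (s (parent^[i] u) : ℝ) ≤ s (parent^[i + 1] u) := fun i => by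
    rw [Function.iterate_succ_apply']
    exact_mod_cast hmono _
  have htelescope : logb 2 ((B : ℝ) / (s u : ℝ)) = ∑ i ∈ range d, g i := by
    rw [sum_range_logb_div 2 _ (fun i => (hspos i).ne'), hd, hB, Function.iterate_zero_apply]
  have hsplit := sum_eq_sum_filter_not_add_sum_filter_and_add_sum_filter_and_not (range d)
    (fun i => 2 * s (parent^[i] u) ≤ s (parent^[i + 1] u))
    (fun i => color (parent^[i + 1] u) = true) g
  simp only [not_le, Bool.not_eq_true] at hsplit
  have hsum_nonneg : ∀ t : Finset ℕ, 0 ≤ ∑ i ∈ t, g i := fun t =>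
    sum_nonneg fun i _ => logb_div_nonneg_of_le one_lt_two (hspos i) (hstep i)
  have hlight : ∀ i, 2 * s (parent^[i] u) ≤ s (parent^[i + 1] u) → 1 ≤ g i := fun i hi =>
    one_le_logb_div_of_mul_le one_lt_two (hspos i) (mod_cast hi)
  rw [htelescope, hsplit]
  exact ⟨potential_nonneg (hsum_nonneg _) fun i hi => hlight i (mem_filter.mp hi).2.1,
    potential_le (hsum_nonneg _) (fun i hi => hlight i (mem_filter.mp hi).2.1)
      fun i hi => hlight i (mem_filter.mp hi).2.1⟩

/-- Bounds on the potential `Φ(u)`.  In a rooted black/white tree with positive subtree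
sizes `s` that are monotone along parent edges and `s root = B`, the root path of `u` is
`u, parent u, …, parent^[d] u = root` (`d` minimal); the edge `(c,p) = (parent^[i] u,
parent^[i+1] u)` is heavy if `s c > s p / 2` (i.e. `2·s c > s p`) and light otherwise.
With `H(u)`, `L_b(u)`, `L_w(u)` the heavy edges, light edges with black parent, and
light edges with white parent of the root path, the potential
`Φ(u) = |L_b(u)| + 2·⌊Σ_{(c,p)∈H(u)} log₂(s p / s c)⌋
      + Σ_{(c,p)∈L_w(u)} (6·⌊log₂(s p / s c)⌋ − 1)`
satisfies `0 ≤ Φ(u) ≤ max 0 (6·⌊log₂(B / s u)⌋ − 1)`. -/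
theorem stmt19 {V : Type*} [Fintype V] (parent : V → V) (root : V)
    (hroot : parent root = root)
    (color : V → Bool) (s : V → ℕ) (B : ℕ)
    (hpos : ∀ v, 1 ≤ s v) (hmono : ∀ v, s v ≤ s (parent v)) (hB : s root = B)
    (u : V) (d : ℕ) (hd : parent^[d] u = root) (hmin : ∀ m < d, parent^[m] u ≠ root) :
    0 ≤
      (((Finset.range d).filter (fun i =>
            2 * s (parent^[i] u) ≤ s (parent^[i + 1] u) ∧
              color (parent^[i + 1] u) = true)).card : ℤ)
        + 2 * ⌊∑ i ∈ (Finset.range d).filter (fun i =>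
              s (parent^[i + 1] u) < 2 * s (parent^[i] u)),
            Real.logb 2 ((s (parent^[i + 1] u) : ℝ) / (s (parent^[i] u) : ℝ))⌋
        + ∑ i ∈ (Finset.range d).filter (fun i =>
              2 * s (parent^[i] u) ≤ s (parent^[i + 1] u) ∧
                color (parent^[i + 1] u) = false),
            (6 * ⌊Real.logb 2 ((s (parent^[i + 1] u) : ℝ) / (s (parent^[i] u) : ℝ))⌋ - 1) ∧
    (((Finset.range d).filter (fun i =>
            2 * s (parent^[i] u) ≤ s (parent^[i + 1] u) ∧
              color (parent^[i + 1] u) = true)).card : ℤ)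
        + 2 * ⌊∑ i ∈ (Finset.range d).filter (fun i =>
              s (parent^[i + 1] u) < 2 * s (parent^[i] u)),
            Real.logb 2 ((s (parent^[i + 1] u) : ℝ) / (s (parent^[i] u) : ℝ))⌋
        + ∑ i ∈ (Finset.range d).filter (fun i =>
              2 * s (parent^[i] u) ≤ s (parent^[i + 1] u) ∧
                color (parent^[i + 1] u) = false),
            (6 * ⌊Real.logb 2 ((s (parent^[i + 1] u) : ℝ) / (s (parent^[i] u) : ℝ))⌋ - 1)
      ≤ max 0 (6 * ⌊Real.logb 2 ((B : ℝ) / (s u : ℝ))⌋ - 1) :=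
  stmt19_general parent root color s B hpos hmono hB u d hd
end
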